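/- arXiv:math/0002005 — 6 statements merged into one kernel-verified Lean document; each statement's English description precedes it below -/
import Mathlib

section
/- Let n ≥ 3 be an integer and let u be a positive smooth solution of Δu + K u^{(n+2)/(n-2)} = 0 on ℝⁿ with K smooth and satisfying a² ≤ K(x) ≤ b² for all sufficiently large |x| (for some constants 0 < a ≤ b), and assume the known growth estimate ∫_{B₀(r)} u^{(n+2)/(n-2)} dx ≤ C₂ r^{(n-2)/2} for large r. Assume u is bounded from above on ℝⁿ and that the radial derivative of K satisfies (∂K/∂r)(x) ≥ −C₁ / (|x|^{(n+2)/2} (ln |x|)^{1+ε}) for all sufficiently large |x|, for some positive constants C₁ and ε. Then there is a positive constant δ such that P(u,r) ≥ −δ² for all sufficiently large r. -/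
open MeasureTheory Metric Real Set Filter

noncomputable section

/-- Euclidean space ℝⁿ. -/
abbrev En (n : ℕ) : Type := EuclideanSpace ℝ (Fin n)

/-- The standard Laplacian on ℝⁿ: Δu(x) = ∑ᵢ ∂²u/∂xᵢ². -/
def lap {n : ℕ} (u : En n → ℝ) (x : En n) : ℝ :=
  ∑ i : Fin n, fderiv ℝ (fun y => fderiv ℝ u y (EuclideanSpace.single i 1)) x
    (EuclideanSpace.single i 1)

/-- The surface measure dθ on the unit sphere S^{n-1} ⊂ ℝⁿ. -/
def sphereM (n : ℕ) : Measure (sphere (0 : En n) 1) :=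
  (volume : Measure (En n)).toSphere

/-- The radial derivative (∂u/∂r)(x) = (x/|x|)·∇u(x). -/
def radDeriv {n : ℕ} (u : En n → ℝ) (x : En n) : ℝ :=
  fderiv ℝ u x (‖x‖⁻¹ • x)

/-- The associated function on the cylinder: v(s,θ) = e^{(n-2)s/2} u(e^s θ). -/
def vfun {n : ℕ} (u : En n → ℝ) (s : ℝ) (θ : sphere (0 : En n) 1) : ℝ :=
  Real.exp (((n : ℝ) - 2) * s / 2) * u (Real.exp s • (θ : En n))

/-- The partial derivative ∂v/∂s. -/
def dvds {n : ℕ} (u : En n → ℝ) (s : ℝ) (θ : sphere (0 : En n) 1) : ℝ :=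
  deriv (fun t => vfun u t θ) s

/-- The Pohozaev quantity P(u,r) = ((n-2)/(2n)) ∫_{B₀(r)} x·∇K(x) u(x)^{2n/(n-2)} dx. -/
def poho {n : ℕ} (K u : En n → ℝ) (r : ℝ) : ℝ :=
  (((n : ℝ) - 2) / (2 * (n : ℝ))) *
    ∫ x in ball (0 : En n) r,
      (inner ℝ x (gradient K x) : ℝ) * u x ^ (2 * (n : ℝ) / ((n : ℝ) - 2))

set_option maxHeartbeats 2000000 in
/-- Theorem 3.2 (Leung): if u is bounded above and ∂K/∂r has the stated lower bound,
then P(u,r) is bounded below by -δ² for large r. -/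
theorem stmt_3 (n : ℕ) (hn : 3 ≤ n) (u K : En n → ℝ)
    (hu_smooth : ContDiff ℝ (⊤ : ℕ∞) u) (hK_smooth : ContDiff ℝ (⊤ : ℕ∞) K)
    (hu_pos : ∀ x, 0 < u x)
    (a b : ℝ) (ha : 0 < a) (hab : a ≤ b)
    (hK_bd : ∃ R : ℝ, ∀ x : En n, R ≤ ‖x‖ → a ^ 2 ≤ K x ∧ K x ≤ b ^ 2)
    (hpde : ∀ x, lap u x + K x * u x ^ (((n : ℝ) + 2) / ((n : ℝ) - 2)) = 0)
    (C₂ : ℝ) (hC₂ : 0 < C₂)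
    (hgrow : ∃ R : ℝ, ∀ r : ℝ, R ≤ r →
      (∫ x in ball (0 : En n) r, u x ^ (((n : ℝ) + 2) / ((n : ℝ) - 2)))
        ≤ C₂ * r ^ (((n : ℝ) - 2) / 2))
    (hu_bdd : ∃ M : ℝ, ∀ x, u x ≤ M)
    (C₁ ε : ℝ) (hC₁ : 0 < C₁) (hε : 0 < ε)
    (hKr : ∃ R : ℝ, ∀ x : En n, R ≤ ‖x‖ →
      -C₁ / (‖x‖ ^ (((n : ℝ) + 2) / 2) * (Real.log ‖x‖) ^ (1 + ε)) ≤ radDeriv K x) :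
    ∃ δ : ℝ, 0 < δ ∧ ∃ R : ℝ, ∀ r : ℝ, R ≤ r → -δ ^ 2 ≤ poho K u r := by
  classical
  obtain ⟨M, hM⟩ := hu_bdd
  have hM0 : 0 < M := (hu_pos 0).trans_le (hM 0)
  obtain ⟨R₁, hR₁⟩ := hKr
  obtain ⟨R₂, hR₂⟩ := hgrow
  have hn3 : (3:ℝ) ≤ (n:ℝ) := by exact_mod_cast hn
  have hn2 : (0:ℝ) < (n:ℝ) - 2 := by linarith
  set t : ℝ := ((n:ℝ) - 2) / 2 with ht
  have ht0 : 0 < t := by positivity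
  set r₀ : ℝ := max (max R₁ R₂) (Real.exp 1) with hr₀def
  have hr₀e : Real.exp 1 ≤ r₀ := le_max_right _ _
  have hr₀pos : 0 < r₀ := (Real.exp_pos 1).trans_le hr₀e
  have hr₀R₁ : R₁ ≤ r₀ := le_trans (le_max_left _ _) (le_max_left _ _)
  have hr₀R₂ : R₂ ≤ r₀ := le_trans (le_max_right _ _) (le_max_left _ _)
  -- continuity facts
  have hu_cont : Continuous u := hu_smooth.continuous
  have hrq : Continuous fun x : En n => u x ^ (2 * (n:ℝ) / ((n:ℝ) - 2)) :=
    hu_cont.rpow_const fun x => Or.inl (hu_pos x).ne'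
  have hrp : Continuous fun x : En n => u x ^ (((n:ℝ) + 2) / ((n:ℝ) - 2)) :=
    hu_cont.rpow_const fun x => Or.inl (hu_pos x).ne'
  set f : En n → ℝ :=
    fun x => (inner ℝ x (gradient K x) : ℝ) * u x ^ (2 * (n:ℝ) / ((n:ℝ) - 2)) with hfdef
  have hf_eq : ∀ x, f x = fderiv ℝ K x x * u x ^ (2 * (n:ℝ) / ((n:ℝ) - 2)) := by
    intro x
    have : (inner ℝ x (gradient K x) : ℝ) = fderiv ℝ K x x := by
      rw [real_inner_comm, gradient, InnerProductSpace.toDual_symm_apply]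
    simp only [hfdef]
    rw [this]
  have hf_cont : Continuous f := by
    have h1 : Continuous fun x : En n => fderiv ℝ K x x :=
      (hK_smooth.continuous_fderiv (by simp)).clm_apply continuous_id
    have : f = fun x => fderiv ℝ K x x * u x ^ (2 * (n:ℝ) / ((n:ℝ) - 2)) := funext hf_eq
    rw [this]; exact h1.mul hrq
  set g : En n → ℝ :=
    fun x => C₁ * M * ‖x‖ ^ (-(n:ℝ)/2) * u x ^ (((n:ℝ) + 2) / ((n:ℝ) - 2)) with hgdef
  have hg_nonneg : ∀ x, 0 ≤ g x := by
    intro x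
    have := (hu_pos x).le
    rw [hgdef]; positivity
  -- exponent splitting
  have hexp : 2 * (n:ℝ) / ((n:ℝ) - 2) = ((n:ℝ) + 2) / ((n:ℝ) - 2) + 1 := by
    field_simp
    ring
  have hsplitu : ∀ x, u x ^ (2 * (n:ℝ) / ((n:ℝ) - 2))
      = u x ^ (((n:ℝ) + 2) / ((n:ℝ) - 2)) * u x := by
    intro x; rw [hexp, Real.rpow_add_one (hu_pos x).ne']
  -- pointwise bound on the outer region
  have hfg : ∀ x : En n, r₀ ≤ ‖x‖ → -g x ≤ f x := by
    intro x hx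
    have hx0 : 0 < ‖x‖ := hr₀pos.trans_le hx
    have hxe : Real.exp 1 ≤ ‖x‖ := hr₀e.trans hx
    have hlog : 1 ≤ Real.log ‖x‖ := (Real.le_log_iff_exp_le hx0).2 hxe
    have hL : 1 ≤ Real.log ‖x‖ ^ (1 + ε) := Real.one_le_rpow hlog (by linarith)
    have hA : 0 < ‖x‖ ^ (((n:ℝ) + 2) / 2) := Real.rpow_pos_of_pos hx0 _
    have hrad : -C₁ / (‖x‖ ^ (((n:ℝ) + 2) / 2) * Real.log ‖x‖ ^ (1 + ε)) ≤ radDeriv K x :=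
      hR₁ x (hr₀R₁.trans hx)
    set U : ℝ := u x ^ (2 * (n:ℝ) / ((n:ℝ) - 2)) with hU
    have hU0 : 0 ≤ U := Real.rpow_nonneg (hu_pos x).le _
    set P : ℝ := u x ^ (((n:ℝ) + 2) / ((n:ℝ) - 2)) with hP
    have hP0 : 0 ≤ P := Real.rpow_nonneg (hu_pos x).le _
    have hUP : U ≤ P * M := by
      rw [hU, hsplitu x]
      exact mul_le_mul_of_nonneg_left (hM x) hP0
    -- f x = ‖x‖ * radDeriv K x * U
    have hfx : f x = ‖x‖ * radDeriv K x * U := by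
      rw [hf_eq x]
      congr 1
      have hxx : (‖x‖ : ℝ) • (‖x‖⁻¹ • x) = x := by
        rw [smul_smul, mul_inv_cancel₀ hx0.ne', one_smul]
      calc fderiv ℝ K x x = fderiv ℝ K x ((‖x‖ : ℝ) • (‖x‖⁻¹ • x)) := by rw [hxx]
        _ = ‖x‖ * radDeriv K x := by rw [ContinuousLinearMap.map_smul]; rfl
    have hAL : ‖x‖ / (‖x‖ ^ (((n:ℝ) + 2) / 2) * Real.log ‖x‖ ^ (1 + ε)) ≤ ‖x‖ ^ (-(n:ℝ)/2) := by
      have h2 : ‖x‖ / (‖x‖ ^ (((n:ℝ) + 2) / 2) * Real.log ‖x‖ ^ (1 + ε))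
          ≤ ‖x‖ / ‖x‖ ^ (((n:ℝ) + 2) / 2) := by
        apply div_le_div_of_nonneg_left hx0.le hA
        exact le_mul_of_one_le_right hA.le hL
      have h3 : ‖x‖ / ‖x‖ ^ (((n:ℝ) + 2) / 2) = ‖x‖ ^ (-(n:ℝ)/2) := by
        rw [show -(n:ℝ)/2 = 1 - ((n:ℝ) + 2) / 2 by ring, Real.rpow_sub hx0, Real.rpow_one]
      linarith
    have h1 : ‖x‖ * (-C₁ / (‖x‖ ^ (((n:ℝ) + 2) / 2) * Real.log ‖x‖ ^ (1 + ε))) * U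
        ≤ ‖x‖ * radDeriv K x * U := by
      apply mul_le_mul_of_nonneg_right _ hU0
      exact mul_le_mul_of_nonneg_left hrad hx0.le
    have h4 : -g x ≤ ‖x‖ * (-C₁ / (‖x‖ ^ (((n:ℝ) + 2) / 2) * Real.log ‖x‖ ^ (1 + ε))) * U := by
      have hc1 : 0 ≤ ‖x‖ / (‖x‖ ^ (((n:ℝ) + 2) / 2) * Real.log ‖x‖ ^ (1 + ε)) := by positivity
      have hc2 : (0:ℝ) ≤ ‖x‖ ^ (-(n:ℝ)/2) := Real.rpow_nonneg hx0.le _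
      have key : ‖x‖ / (‖x‖ ^ (((n:ℝ) + 2) / 2) * Real.log ‖x‖ ^ (1 + ε)) * U
          ≤ ‖x‖ ^ (-(n:ℝ)/2) * (P * M) :=
        mul_le_mul hAL hUP hU0 hc2
      have hgx : g x = C₁ * M * ‖x‖ ^ (-(n:ℝ)/2) * P := by rw [hgdef]
      have expand : ‖x‖ * (-C₁ / (‖x‖ ^ (((n:ℝ) + 2) / 2) * Real.log ‖x‖ ^ (1 + ε))) * U
          = -(C₁ * (‖x‖ / (‖x‖ ^ (((n:ℝ) + 2) / 2) * Real.log ‖x‖ ^ (1 + ε)) * U)) := by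
        ring
      rw [expand, hgx]
      have : C₁ * (‖x‖ / (‖x‖ ^ (((n:ℝ) + 2) / 2) * Real.log ‖x‖ ^ (1 + ε)) * U)
          ≤ C₁ * M * ‖x‖ ^ (-(n:ℝ)/2) * P := by
        nlinarith [key, hC₁.le]
      linarith
    linarith [hfx ▸ h1.trans_eq' rfl, h1, h4, hfx]
  -- integrability facts
  have hf_int : ∀ ρ : ℝ, IntegrableOn f (closedBall (0 : En n) ρ) := fun ρ =>
    hf_cont.continuousOn.integrableOn_compact (isCompact_closedBall _ _)
  have hp_int : ∀ ρ : ℝ, IntegrableOn (fun x => u x ^ (((n:ℝ) + 2) / ((n:ℝ) - 2)))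
      (closedBall (0 : En n) ρ) := fun ρ =>
    hrp.continuousOn.integrableOn_compact (isCompact_closedBall _ _)
  have hg_contOn : ContinuousOn g {x : En n | x ≠ 0} := by
    rw [hgdef]
    apply ContinuousOn.mul _ hrp.continuousOn
    apply ContinuousOn.mul continuousOn_const
    apply ContinuousOn.rpow_const continuous_norm.continuousOn
    intro x hx
    exact Or.inl (norm_ne_zero_iff.2 hx)
  have hg_int : ∀ ρ₁ ρ₂ : ℝ, 0 < ρ₁ → IntegrableOn g (closedBall (0 : En n) ρ₂ \ ball 0 ρ₁) := by
    intro ρ₁ ρ₂ h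
    apply ContinuousOn.integrableOn_compact ((isCompact_closedBall _ _).diff isOpen_ball)
    apply hg_contOn.mono
    intro x hx
    have : ρ₁ ≤ ‖x‖ := by
      have := hx.2
      simpa [mem_ball_zero_iff, not_lt] using this
    exact fun h0 => by simp [h0] at this; linarith
  have hg_int' : ∀ ρ₁ ρ₂ : ℝ, 0 < ρ₁ → IntegrableOn g (ball (0 : En n) ρ₂ \ ball 0 ρ₁) :=
    fun ρ₁ ρ₂ h => (hg_int ρ₁ ρ₂ h).mono_set
      (Set.diff_subset_diff_left ball_subset_closedBall)
  -- annulus estimate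
  set E₀ : ℝ := C₁ * M * C₂ * (2:ℝ) ^ t / r₀ with hE₀def
  have hE₀0 : 0 ≤ E₀ := by rw [hE₀def]; positivity
  have hann : ∀ j : ℕ, ∫ x in ball (0 : En n) (r₀ * 2 ^ (j+1)) \ ball 0 (r₀ * 2 ^ j), g x
      ≤ E₀ * (1/2) ^ j := by
    intro j
    set Bj : ℝ := r₀ * 2 ^ j with hBjdef
    have hBj : 0 < Bj := by rw [hBjdef]; positivity
    have h2Bj : r₀ * 2 ^ (j+1) = 2 * Bj := by rw [hBjdef]; ring
    set A : Set (En n) := ball (0 : En n) (r₀ * 2 ^ (j+1)) \ ball 0 Bj with hAdef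
    have hAmeas : MeasurableSet A := measurableSet_ball.diff measurableSet_ball
    have hgA : IntegrableOn g A := hg_int' Bj _ hBj
    have step1 : ∫ x in A, g x
        ≤ ∫ x in A, C₁ * M * Bj ^ (-(n:ℝ)/2) * u x ^ (((n:ℝ) + 2) / ((n:ℝ) - 2)) := by
      apply setIntegral_mono_on hgA _ hAmeas
      · intro x hx
        have hxB : Bj ≤ ‖x‖ := by
          have := hx.2
          simpa [mem_ball_zero_iff, not_lt] using this
        simp only [hgdef]
        have hrpow : ‖x‖ ^ (-(n:ℝ)/2) ≤ Bj ^ (-(n:ℝ)/2) :=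
          Real.rpow_le_rpow_of_nonpos hBj hxB (by linarith)
        have hup : (0:ℝ) ≤ u x ^ (((n:ℝ) + 2) / ((n:ℝ) - 2)) := Real.rpow_nonneg (hu_pos x).le _
        exact mul_le_mul_of_nonneg_right
          (mul_le_mul_of_nonneg_left hrpow (by positivity)) hup
      · exact (((hp_int _).mono_set
          (Set.diff_subset.trans ball_subset_closedBall)).const_mul _)
    have step2 : ∫ x in A, C₁ * M * Bj ^ (-(n:ℝ)/2) * u x ^ (((n:ℝ) + 2) / ((n:ℝ) - 2))
        = C₁ * M * Bj ^ (-(n:ℝ)/2) * ∫ x in A, u x ^ (((n:ℝ) + 2) / ((n:ℝ) - 2)) :=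
      integral_const_mul _ _
    have step3 : ∫ x in A, u x ^ (((n:ℝ) + 2) / ((n:ℝ) - 2))
        ≤ ∫ x in ball (0 : En n) (r₀ * 2 ^ (j+1)), u x ^ (((n:ℝ) + 2) / ((n:ℝ) - 2)) := by
      apply setIntegral_mono_set ((hp_int _).mono_set ball_subset_closedBall)
      · exact Filter.Eventually.of_forall fun x => Real.rpow_nonneg (hu_pos x).le _
      · exact HasSubset.Subset.eventuallyLE Set.diff_subset
    have hR2' : R₂ ≤ r₀ * 2 ^ (j+1) := by
      have h1 : (1:ℝ) ≤ 2 ^ (j+1) := one_le_pow₀ (by norm_num)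
      nlinarith [hr₀R₂, hr₀pos]
    have step4 : ∫ x in ball (0 : En n) (r₀ * 2 ^ (j+1)), u x ^ (((n:ℝ) + 2) / ((n:ℝ) - 2))
        ≤ C₂ * (r₀ * 2 ^ (j+1)) ^ (((n:ℝ) - 2) / 2) := hR₂ _ hR2'
    have hconst : (0:ℝ) ≤ C₁ * M * Bj ^ (-(n:ℝ)/2) := by positivity
    have key : Bj ^ (-(n:ℝ)/2) * (2 * Bj) ^ t = (2:ℝ) ^ t / Bj := by
      rw [Real.mul_rpow (by norm_num : (0:ℝ) ≤ 2) hBj.le,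
        show -(n:ℝ)/2 = -t + -1 by rw [ht]; ring,
        Real.rpow_add hBj, Real.rpow_neg_one, Real.rpow_neg hBj.le]
      have h1 : Bj ^ t ≠ 0 := (Real.rpow_pos_of_pos hBj t).ne'
      field_simp
    have final : C₁ * M * Bj ^ (-(n:ℝ)/2) * (C₂ * (r₀ * 2 ^ (j+1)) ^ (((n:ℝ) - 2) / 2))
        = E₀ * (1/2) ^ j := by
      rw [h2Bj, ← ht]
      have : C₁ * M * Bj ^ (-(n:ℝ)/2) * (C₂ * (2 * Bj) ^ t)
          = C₁ * M * C₂ * (Bj ^ (-(n:ℝ)/2) * (2 * Bj) ^ t) := by ring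
      rw [this, key, hE₀def, hBjdef]
      have h2j : ((2:ℝ) ^ j) ≠ 0 := by positivity
      field_simp
      rw [← mul_pow]; norm_num
    calc ∫ x in A, g x
        ≤ C₁ * M * Bj ^ (-(n:ℝ)/2) * ∫ x in A, u x ^ (((n:ℝ) + 2) / ((n:ℝ) - 2)) := by
          rw [← step2]; exact step1
      _ ≤ C₁ * M * Bj ^ (-(n:ℝ)/2) * (C₂ * (r₀ * 2 ^ (j+1)) ^ (((n:ℝ) - 2) / 2)) :=
          mul_le_mul_of_nonneg_left (step3.trans step4) hconst
      _ = E₀ * (1/2) ^ j := final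
  -- dyadic induction
  have hΦ : ∀ m : ℕ, ∫ x in ball (0 : En n) (r₀ * 2 ^ m) \ ball 0 r₀, g x
      ≤ E₀ * ∑ j ∈ Finset.range m, (1/2 : ℝ) ^ j := by
    intro m
    induction m with
    | zero =>
      simp only [pow_zero, mul_one, Finset.range_zero, Finset.sum_empty, mul_zero]
      rw [Set.diff_self]
      simp
    | succ m ih =>
      have h1 : r₀ ≤ r₀ * 2 ^ m := le_mul_of_one_le_right hr₀pos.le (one_le_pow₀ (by norm_num))
      have h2 : r₀ * 2 ^ m ≤ r₀ * 2 ^ (m+1) := by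
        have : (2:ℝ) ^ m ≤ 2 ^ (m+1) := by
          apply pow_le_pow_right₀ (by norm_num); omega
        nlinarith [hr₀pos]
      have hdecomp : ball (0 : En n) (r₀ * 2 ^ (m+1)) \ ball 0 r₀
          = (ball (0 : En n) (r₀ * 2 ^ m) \ ball 0 r₀)
            ∪ (ball (0 : En n) (r₀ * 2 ^ (m+1)) \ ball 0 (r₀ * 2 ^ m)) := by
        ext x
        simp only [Set.mem_diff, mem_ball_zero_iff, Set.mem_union, not_lt]
        constructor
        · rintro ⟨hxr, hx0⟩
          rcases lt_or_ge ‖x‖ (r₀ * 2 ^ m) with h | h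
          · exact Or.inl ⟨h, hx0⟩
          · exact Or.inr ⟨hxr, h⟩
        · rintro (⟨h1', h2'⟩ | ⟨h1', h2'⟩)
          · exact ⟨h1'.trans_le h2, h2'⟩
          · exact ⟨h1', h1.trans h2'⟩
      have hdisj : Disjoint (ball (0 : En n) (r₀ * 2 ^ m) \ ball 0 r₀)
          (ball (0 : En n) (r₀ * 2 ^ (m+1)) \ ball 0 (r₀ * 2 ^ m)) :=
        Set.disjoint_left.2 fun x hx hx' => hx'.2 hx.1
      rw [hdecomp, setIntegral_union hdisj (measurableSet_ball.diff measurableSet_ball)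
        (hg_int' r₀ _ hr₀pos) (hg_int' (r₀ * 2 ^ m) _ (by positivity))]
      rw [Finset.sum_range_succ, mul_add]
      have := hann m
      linarith
  have hΦ2 : ∀ m : ℕ, ∫ x in ball (0 : En n) (r₀ * 2 ^ m) \ ball 0 r₀, g x ≤ E₀ * 2 := by
    intro m
    exact (hΦ m).trans (mul_le_mul_of_nonneg_left (sum_geometric_two_le m) hE₀0)
  have hg_bound : ∀ r : ℝ, r₀ ≤ r → ∫ x in ball (0 : En n) r \ ball 0 r₀, g x ≤ E₀ * 2 := by
    intro r hr
    obtain ⟨m, hm⟩ : ∃ m : ℕ, r ≤ r₀ * 2 ^ m := by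
      obtain ⟨m, hm⟩ := pow_unbounded_of_one_lt (r / r₀) (one_lt_two (α := ℝ))
      refine ⟨m, ?_⟩
      rw [div_lt_iff₀ hr₀pos] at hm
      nlinarith
    refine le_trans ?_ (hΦ2 m)
    apply setIntegral_mono_set (hg_int' r₀ _ hr₀pos)
      (Filter.Eventually.of_forall hg_nonneg)
    exact HasSubset.Subset.eventuallyLE
      (Set.diff_subset_diff_left (ball_subset_ball hm))
  -- bound on the inner ball
  obtain ⟨D₀, hD₀⟩ := (isCompact_closedBall (0 : En n) r₀).exists_bound_of_continuousOn
    hf_cont.continuousOn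
  have hD₀0 : 0 ≤ D₀ := (norm_nonneg _).trans (hD₀ 0 (mem_closedBall_self hr₀pos.le))
  set V : ℝ := (volume (ball (0 : En n) r₀)).toReal with hVdef
  have hV0 : 0 ≤ V := ENNReal.toReal_nonneg
  have hinner : |∫ x in ball (0 : En n) r₀, f x| ≤ D₀ * V := by
    rw [← Real.norm_eq_abs]
    exact norm_setIntegral_le_of_norm_le_const measure_ball_lt_top
      (fun x hx => hD₀ x (ball_subset_closedBall hx))
  -- conclusion
  set c : ℝ := ((n:ℝ) - 2) / (2 * (n:ℝ)) with hcdef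
  have hc0 : 0 < c := by rw [hcdef]; positivity
  refine ⟨Real.sqrt (c * (D₀ * V + E₀ * 2) + 1), Real.sqrt_pos.2 (by positivity), r₀, ?_⟩
  intro r hr
  have hIsplit : ∫ x in ball (0 : En n) r, f x
      = (∫ x in ball (0 : En n) r₀, f x) + ∫ x in ball (0 : En n) r \ ball 0 r₀, f x := by
    rw [← setIntegral_union disjoint_sdiff_right (measurableSet_ball.diff measurableSet_ball)
      ((hf_int r₀).mono_set ball_subset_closedBall)
      ((hf_int r).mono_set (Set.diff_subset.trans ball_subset_closedBall)),
      Set.union_diff_cancel (ball_subset_ball hr)]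
  have houter : -(E₀ * 2) ≤ ∫ x in ball (0 : En n) r \ ball 0 r₀, f x := by
    have hmono : ∫ x in ball (0 : En n) r \ ball 0 r₀, (-g x)
        ≤ ∫ x in ball (0 : En n) r \ ball 0 r₀, f x := by
      apply setIntegral_mono_on ((hg_int' r₀ r hr₀pos).neg)
        ((hf_int r).mono_set (Set.diff_subset.trans ball_subset_closedBall))
        (measurableSet_ball.diff measurableSet_ball)
      intro x hx
      apply hfg
      have := hx.2
      simpa [mem_ball_zero_iff, not_lt] using this
    rw [integral_neg] at hmono
    linarith [hg_bound r hr, hmono]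
  have hInt_lb : -(D₀ * V + E₀ * 2) ≤ ∫ x in ball (0 : En n) r, f x := by
    rw [hIsplit]
    have h1 : -(D₀ * V) ≤ ∫ x in ball (0 : En n) r₀, f x := by
      have := abs_le.1 hinner
      linarith [this.1]
    linarith
  have hpoho : poho K u r = c * ∫ x in ball (0 : En n) r, f x := rfl
  rw [hpoho]
  have hsq : Real.sqrt (c * (D₀ * V + E₀ * 2) + 1) ^ 2 = c * (D₀ * V + E₀ * 2) + 1 :=
    Real.sq_sqrt (by positivity)
  rw [hsq]
  have := mul_le_mul_of_nonneg_left hInt_lb hc0.le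
  rw [mul_neg] at this
  linarith
end
end

section
/- Let n ≥ 3 be an integer and let u be a positive smooth solution of Δu + K u^{(n+2)/(n-2)} = 0 on ℝⁿ with K smooth and satisfying a² ≤ K(x) ≤ b² for all sufficiently large |x| (for some constants 0 < a ≤ b). Assume there is a positive constant c such that (∂K/∂r)(rθ) ≥ −c/r² for all sufficiently large r and all θ ∈ S^{n-1}, and that there exist positive constants C and λ ∈ (0,1) such that ∫_{S^{n-1}} |∂v/∂s|^{2n/(n-2)}(s,θ) dθ ≤ C e^{λ s} for all sufficiently large s. Then there is a positive constant δ such that P(u,r) ≥ −δ² for all sufficiently large r. -/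
open MeasureTheory Metric Real Set Filter
open scoped ENNReal NNReal
set_option maxHeartbeats 1000000

noncomputable section

lemma vfun_hasDerivAt {n : ℕ} {u : En n → ℝ} (hu : ContDiff ℝ (⊤ : ℕ∞) u)
    (θ : sphere (0 : En n) 1) (s : ℝ) :
    HasDerivAt (fun t => vfun u t θ)
      (((n : ℝ) - 2) / 2 * Real.exp (((n : ℝ) - 2) * s / 2) * u (Real.exp s • (θ : En n))
        + Real.exp (((n : ℝ) - 2) * s / 2) *
          (fderiv ℝ u (Real.exp s • (θ : En n)) (Real.exp s • (θ : En n)))) s := by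
  have h1 : HasDerivAt (fun t : ℝ => Real.exp (((n : ℝ) - 2) * t / 2))
      (((n : ℝ) - 2) / 2 * Real.exp (((n : ℝ) - 2) * s / 2)) s := by
    have : HasDerivAt (fun t : ℝ => ((n : ℝ) - 2) * t / 2) (((n : ℝ) - 2) / 2) s := by
      simpa using ((hasDerivAt_id s).const_mul (((n : ℝ) - 2))).div_const 2
    simpa [mul_comm, Function.comp_def] using (Real.hasDerivAt_exp (((n : ℝ) - 2) * s / 2)).comp s this
  have h2 : HasDerivAt (fun t : ℝ => Real.exp t • (θ : En n)) (Real.exp s • (θ : En n)) s :=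
    (Real.hasDerivAt_exp s).smul_const (θ : En n)
  have h3 : HasDerivAt (fun t : ℝ => u (Real.exp t • (θ : En n)))
      (fderiv ℝ u (Real.exp s • (θ : En n)) (Real.exp s • (θ : En n))) s :=
    (hu.differentiable (by simp) (Real.exp s • (θ : En n))).hasFDerivAt.comp_hasDerivAt s h2
  simpa [vfun, Pi.mul_def] using h1.mul h3

lemma dvds_eq {n : ℕ} {u : En n → ℝ} (hu : ContDiff ℝ (⊤ : ℕ∞) u)
    (s : ℝ) (θ : sphere (0 : En n) 1) :
    dvds u s θ = ((n : ℝ) - 2) / 2 * Real.exp (((n : ℝ) - 2) * s / 2) * u (Real.exp s • (θ : En n))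
        + Real.exp (((n : ℝ) - 2) * s / 2) *
          (fderiv ℝ u (Real.exp s • (θ : En n)) (Real.exp s • (θ : En n))) :=
  (vfun_hasDerivAt hu θ s).deriv

lemma dvds_continuous {n : ℕ} {u : En n → ℝ} (hu : ContDiff ℝ (⊤ : ℕ∞) u) :
    Continuous (fun q : ℝ × sphere (0 : En n) 1 => dvds u q.1 q.2) := by
  have hc : Continuous (fun q : ℝ × sphere (0 : En n) 1 => Real.exp q.1 • (q.2 : En n)) :=
    (Real.continuous_exp.comp continuous_fst).smul (continuous_subtype_val.comp continuous_snd)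
  have hfd : Continuous (fun x : En n => fderiv ℝ u x) := hu.continuous_fderiv (by simp)
  have h4 : Continuous (fun q : ℝ × sphere (0 : En n) 1 =>
      (fderiv ℝ u (Real.exp q.1 • (q.2 : En n))) (Real.exp q.1 • (q.2 : En n))) :=
    isBoundedBilinearMap_apply.continuous.comp ((hfd.comp hc).prodMk hc)
  have hue : Continuous u := hu.continuous
  have hexp : Continuous (fun q : ℝ × sphere (0 : En n) 1 => Real.exp (((n : ℝ) - 2) * q.1 / 2)) :=
    Real.continuous_exp.comp ((continuous_const.mul continuous_fst).div_const 2)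
  simp only [funext fun q : ℝ × sphere (0 : En n) 1 => dvds_eq hu q.1 q.2]
  exact ((continuous_const.mul hexp).mul (hue.comp hc)).add (hexp.mul h4)

lemma vfun_contDiff {n : ℕ} {u : En n → ℝ} (hu : ContDiff ℝ (⊤ : ℕ∞) u) (θ : sphere (0 : En n) 1) :
    ContDiff ℝ (⊤ : ℕ∞) (fun t => vfun u t θ) := by
  unfold vfun
  have h1 : ContDiff ℝ (⊤ : ℕ∞) (fun t : ℝ => Real.exp (((n : ℝ) - 2) * t / 2)) :=
    Real.contDiff_exp.comp ((contDiff_const.mul contDiff_id).div_const 2)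
  have h2 : ContDiff ℝ (⊤ : ℕ∞) (fun t : ℝ => Real.exp t • (θ : En n)) :=
    Real.contDiff_exp.smul contDiff_const
  exact h1.mul (hu.comp h2)
lemma sphere_integrable {n : ℕ} [Nonempty (Fin n)] {f : sphere (0 : En n) 1 → ℝ}
    (hf : Continuous f) : Integrable f ((volume : Measure (En n)).toSphere) := by
  have : HasCompactSupport f := by
    rw [HasCompactSupport]
    exact (isClosed_tsupport f).isCompact
  exact hf.integrable_of_hasCompactSupport this

-- continuity of x ↦ |x| ^ p for p > 0
lemma cont_abs_rpow {p : ℝ} (hp : 0 < p) : Continuous (fun x : ℝ => |x| ^ p) := by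
  rw [continuous_iff_continuousAt]
  intro x
  exact (Real.continuousAt_rpow_const _ _ (Or.inr hp.le)).comp continuous_abs.continuousAt

-- (A+B)^p ≤ 2^p (A^p + B^p)
lemma add_rpow_le {A B p : ℝ} (hA : 0 ≤ A) (hB : 0 ≤ B) (hp : 0 ≤ p) :
    (A + B) ^ p ≤ 2 ^ p * (A ^ p + B ^ p) := by
  rcases le_total A B with h | h
  · calc (A + B) ^ p ≤ (2 * B) ^ p := by
          apply Real.rpow_le_rpow (by linarith) (by linarith) hp
        _ = 2 ^ p * B ^ p := Real.mul_rpow (by norm_num) hB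
        _ ≤ 2 ^ p * (A ^ p + B ^ p) := by
          have := Real.rpow_nonneg hA p
          have h2 : (0:ℝ) ≤ 2 ^ p := Real.rpow_nonneg (by norm_num) p
          nlinarith
  · calc (A + B) ^ p ≤ (2 * A) ^ p := by
          apply Real.rpow_le_rpow (by linarith) (by linarith) hp
        _ = 2 ^ p * A ^ p := Real.mul_rpow (by norm_num) hA
        _ ≤ 2 ^ p * (A ^ p + B ^ p) := by
          have := Real.rpow_nonneg hB p
          have h2 : (0:ℝ) ≤ 2 ^ p := Real.rpow_nonneg (by norm_num) p
          nlinarith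

-- (exp x) ^ y = exp (x * y)
example (x y : ℝ) : (Real.exp x) ^ y = Real.exp (x * y) := (Real.exp_mul x y).symm

lemma dvds_cont_t {n : ℕ} {u : En n → ℝ} (hu : ContDiff ℝ (⊤ : ℕ∞) u) (θ : sphere (0 : En n) 1) :
    Continuous (fun t => dvds u t θ) := by
  have hc : Continuous (fun t : ℝ => Real.exp t • (θ : En n)) :=
    Real.continuous_exp.smul continuous_const
  have hfd : Continuous (fun x : En n => fderiv ℝ u x) := hu.continuous_fderiv (by simp)
  have h4 : Continuous (fun t : ℝ =>
      (fderiv ℝ u (Real.exp t • (θ : En n))) (Real.exp t • (θ : En n))) :=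
    isBoundedBilinearMap_apply.continuous.comp ((hfd.comp hc).prodMk hc)
  have hexp : Continuous (fun t : ℝ => Real.exp (((n : ℝ) - 2) * t / 2)) :=
    Real.continuous_exp.comp ((continuous_const.mul continuous_id).div_const 2)
  simp only [funext fun t : ℝ => dvds_eq hu t θ]
  exact ((continuous_const.mul hexp).mul (hu.continuous.comp hc)).add (hexp.mul h4)

lemma dvds_cont_theta {n : ℕ} {u : En n → ℝ} (hu : ContDiff ℝ (⊤ : ℕ∞) u) (t : ℝ) :
    Continuous (fun θ : sphere (0 : En n) 1 => dvds u t θ) := by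
  have hc : Continuous (fun θ : sphere (0 : En n) 1 => Real.exp t • (θ : En n)) :=
    by fun_prop
  have hfd : Continuous (fun x : En n => fderiv ℝ u x) := hu.continuous_fderiv (by simp)
  have h4 : Continuous (fun θ : sphere (0 : En n) 1 =>
      (fderiv ℝ u (Real.exp t • (θ : En n))) (Real.exp t • (θ : En n))) :=
    isBoundedBilinearMap_apply.continuous.comp ((hfd.comp hc).prodMk hc)
  simp only [funext fun θ : sphere (0 : En n) 1 => dvds_eq hu t θ]
  exact (continuous_const.mul (hu.continuous.comp hc)).add (continuous_const.mul h4)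

-- joint continuity in (θ, t) order
lemma dvds_continuous' {n : ℕ} {u : En n → ℝ} (hu : ContDiff ℝ (⊤ : ℕ∞) u) :
    Continuous (fun z : sphere (0 : En n) 1 × ℝ => dvds u z.2 z.1) := by
  have hc : Continuous (fun z : sphere (0 : En n) 1 × ℝ => Real.exp z.2 • (z.1 : En n)) :=
    (Real.continuous_exp.comp continuous_snd).smul (continuous_subtype_val.comp continuous_fst)
  have hfd : Continuous (fun x : En n => fderiv ℝ u x) := hu.continuous_fderiv (by simp)
  have h4 : Continuous (fun z : sphere (0 : En n) 1 × ℝ =>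
      (fderiv ℝ u (Real.exp z.2 • (z.1 : En n))) (Real.exp z.2 • (z.1 : En n))) :=
    isBoundedBilinearMap_apply.continuous.comp ((hfd.comp hc).prodMk hc)
  have hexp : Continuous (fun z : sphere (0 : En n) 1 × ℝ =>
      Real.exp (((n : ℝ) - 2) * z.2 / 2)) :=
    Real.continuous_exp.comp ((continuous_const.mul continuous_snd).div_const 2)
  simp only [funext fun z : sphere (0 : En n) 1 × ℝ => dvds_eq hu z.2 z.1]
  exact ((continuous_const.mul hexp).mul (hu.continuous.comp hc)).add (hexp.mul h4)

lemma exp_integral_bound {β C s0 s : ℝ} (hβ : 0 < β) (hC : 0 ≤ C) (h : s0 ≤ s) :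
    ∫ t in Ioc s0 s, C * Real.exp (β * t) ≤ C / β * Real.exp (β * s) := by
  have hd : ∀ t : ℝ, HasDerivAt (fun t => C / β * Real.exp (β * t)) (C * Real.exp (β * t)) t := by
    intro t
    have h1 : HasDerivAt (fun t : ℝ => β * t) β t := by
      simpa using (hasDerivAt_id t).const_mul β
    have := (h1.exp.const_mul (C / β))
    convert this using 1
    rfl
    rfl
    field_simp [hβ.ne']
  have hint : ∫ t in s0..s, C * Real.exp (β * t) =
      C / β * Real.exp (β * s) - C / β * Real.exp (β * s0) :=
    intervalIntegral.integral_eq_sub_of_hasDerivAt (fun t _ => hd t)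
      ((continuous_const.mul (Real.continuous_exp.comp
        (continuous_const.mul continuous_id))).intervalIntegrable _ _)
  rw [← intervalIntegral.integral_of_le h, hint]
  have : 0 ≤ C / β * Real.exp (β * s0) := by positivity
  linarith

lemma sphere_vfun_bound {n : ℕ} (hn : 3 ≤ n) {u : En n → ℝ} (hu : ContDiff ℝ (⊤ : ℕ∞) u)
    (hu_pos : ∀ x, 0 < u x) {C l S : ℝ} (hC : 0 < C) (hl0 : 0 < l) (hl1 : l < 1)
    (hv : ∀ s : ℝ, S ≤ s →
      (∫ θ, |dvds u s θ| ^ (2 * (n : ℝ) / ((n : ℝ) - 2)) ∂((volume : Measure (En n)).toSphere))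
        ≤ C * Real.exp (l * s)) :
    ∃ E₀ E₁ : ℝ≥0∞, E₀ ≠ ⊤ ∧ E₁ ≠ ⊤ ∧ ∀ s : ℝ, max S 0 ≤ s →
      (∫⁻ θ, ENNReal.ofReal (vfun u s θ ^ (2 * (n : ℝ) / ((n : ℝ) - 2)))
          ∂((volume : Measure (En n)).toSphere))
        ≤ E₀ + E₁ * ENNReal.ofReal (Real.exp ((1 + l) / 2 * s)) := by
  have : Nonempty (Fin n) := ⟨⟨0, by omega⟩⟩
  set ν := (volume : Measure (En n)).toSphere with hν_def
  have hn3 : (3 : ℝ) ≤ (n : ℝ) := by exact_mod_cast hn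
  set p : ℝ := 2 * (n : ℝ) / ((n : ℝ) - 2) with hp_def
  have hp1 : 1 < p := by
    rw [hp_def, lt_div_iff₀ (by linarith)]; linarith
  have hp0 : 0 < p := by linarith
  set q : ℝ := p / (p - 1) with hq_def
  have hpq : p.HolderConjugate q := Real.HolderConjugate.conjExponent hp1
  have hq0 : 0 < q := hpq.symm.pos
  set μ₀ : ℝ := (1 - l) / (2 * p) with hμ₀_def
  have hμ₀ : 0 < μ₀ := div_pos (by linarith) (by linarith)
  set β : ℝ := (1 + l) / 2 with hβ_def
  have hβ0 : 0 < β := by rw [hβ_def]; linarith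
  have hβ : μ₀ * p + l = β := by
    rw [hμ₀_def, hβ_def]; field_simp; ring
  set s0 : ℝ := max S 0 with hs0_def
  have hSs0 : S ≤ s0 := le_max_left _ _
  -- positivity of vfun
  have hvf_pos : ∀ (t : ℝ) (θ : sphere (0 : En n) 1), 0 < vfun u t θ := fun t θ =>
    mul_pos (Real.exp_pos _) (hu_pos _)
  -- the constant D from Hölder
  set D : ℝ≥0∞ :=
    (∫⁻ t in Ioi s0, ENNReal.ofReal (Real.exp (-(μ₀ * q) * t))) ^ (p / q) with hD_def
  have hD_ne : D ≠ ⊤ := by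
    apply ENNReal.rpow_ne_top_of_nonneg (by positivity)
    have hint : IntegrableOn (fun t : ℝ => Real.exp (-(μ₀ * q) * t)) (Ioi s0) :=
      exp_neg_integrableOn_Ioi s0 (by positivity)
    rw [lintegral_ofReal_ne_top_iff_integrable hint.aestronglyMeasurable
      (Eventually.of_forall fun t => (Real.exp_pos _).le)]
    exact hint
  -- E₀
  have hvs0_cont : Continuous (fun θ : sphere (0 : En n) 1 => vfun u s0 θ ^ p) := by
    have h1 : Continuous (fun θ : sphere (0 : En n) 1 => vfun u s0 θ) := by
      unfold vfun
      exact continuous_const.mul (hu.continuous.comp (by fun_prop))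
    have heq : (fun θ : sphere (0 : En n) 1 => vfun u s0 θ ^ p)
        = fun θ => |vfun u s0 θ| ^ p := by
      funext θ
      rw [abs_of_pos (hvf_pos s0 θ)]
    rw [heq]
    exact (cont_abs_rpow hp0).comp h1
  set V0 : ℝ≥0∞ := ∫⁻ θ, ENNReal.ofReal (vfun u s0 θ ^ p) ∂ν with hV0_def
  have hV0_ne : V0 ≠ ⊤ := by
    rw [hV0_def, lintegral_ofReal_ne_top_iff_integrable
      (sphere_integrable hvs0_cont).aestronglyMeasurable
      (Eventually.of_forall fun θ => Real.rpow_nonneg (hvf_pos s0 θ).le p)]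
    exact sphere_integrable hvs0_cont
  refine ⟨ENNReal.ofReal (2 ^ p) * V0,
    ENNReal.ofReal (2 ^ p) * D * ENNReal.ofReal (C / β), ?_, ?_, ?_⟩
  · exact ENNReal.mul_ne_top ENNReal.ofReal_ne_top hV0_ne
  · exact ENNReal.mul_ne_top (ENNReal.mul_ne_top ENNReal.ofReal_ne_top hD_ne) ENNReal.ofReal_ne_top
  intro s hs
  -- J θ
  set J : sphere (0 : En n) 1 → ℝ≥0∞ := fun θ =>
    ∫⁻ t in Ioc s0 s, ENNReal.ofReal (Real.exp (μ₀ * p * t) * |dvds u t θ| ^ p) with hJ_def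
  -- pointwise bound
  have key : ∀ θ : sphere (0 : En n) 1, ENNReal.ofReal (vfun u s θ ^ p) ≤
      ENNReal.ofReal (2 ^ p) * (ENNReal.ofReal (vfun u s0 θ ^ p) + D * J θ) := by
    intro θ
    set I : ℝ := ∫ t in Ioc s0 s, |dvds u t θ| with hI_def
    have hI0 : 0 ≤ I := setIntegral_nonneg measurableSet_Ioc fun t _ => abs_nonneg _
    -- FTC
    have hvle : vfun u s θ ≤ vfun u s0 θ + I := by
      have hd : ∀ t ∈ uIcc s0 s, HasDerivAt (fun t => vfun u t θ) (dvds u t θ) t := by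
        intro t _
        exact (((vfun_contDiff hu θ).differentiable (by simp)) t).hasDerivAt
      have hcont : Continuous fun t => dvds u t θ := dvds_cont_t hu θ
      have hftc : ∫ t in s0..s, dvds u t θ = vfun u s θ - vfun u s0 θ :=
        intervalIntegral.integral_eq_sub_of_hasDerivAt hd (hcont.intervalIntegrable _ _)
      have habs : ∫ t in s0..s, dvds u t θ ≤ ∫ t in s0..s, |dvds u t θ| :=
        le_trans (le_abs_self _) (intervalIntegral.abs_integral_le_integral_abs hs)
      rw [hftc, intervalIntegral.integral_of_le hs] at habs
      rw [hI_def]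
      linarith
    -- Hölder
    have hIp : ENNReal.ofReal (I ^ p) ≤ D * J θ := by
      have hcont : Continuous fun t => dvds u t θ := dvds_cont_t hu θ
      have hIof : ENNReal.ofReal I = ∫⁻ t in Ioc s0 s, ENNReal.ofReal |dvds u t θ| :=
        ofReal_integral_eq_lintegral_ofReal (hcont.abs.integrableOn_Ioc)
          (Eventually.of_forall fun t => abs_nonneg _)
      set f : ℝ → ℝ≥0∞ := fun t => ENNReal.ofReal (Real.exp (μ₀ * t) * |dvds u t θ|) with hf_def
      set g : ℝ → ℝ≥0∞ := fun t => ENNReal.ofReal (Real.exp (-μ₀ * t)) with hg_def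
      have hfg : ∀ t, ENNReal.ofReal |dvds u t θ| = (f * g) t := by
        intro t
        rw [Pi.mul_apply, hf_def, hg_def, ← ENNReal.ofReal_mul (by positivity)]
        congr 1
        rw [mul_right_comm, mul_comm (Real.exp (μ₀ * t)), ← Real.exp_add]
        norm_num
      have hf_meas : AEMeasurable f (volume.restrict (Ioc s0 s)) := by
        apply Measurable.aemeasurable
        apply ENNReal.measurable_ofReal.comp
        exact ((Real.continuous_exp.comp (continuous_const.mul continuous_id)).mul
          hcont.abs).measurable
      have hg_meas : AEMeasurable g (volume.restrict (Ioc s0 s)) := by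
        apply Measurable.aemeasurable
        apply ENNReal.measurable_ofReal.comp
        exact (Real.continuous_exp.comp (continuous_const.mul continuous_id)).measurable
      have hH := ENNReal.lintegral_mul_le_Lp_mul_Lq (volume.restrict (Ioc s0 s)) hpq
        hf_meas hg_meas
      have hIle : ENNReal.ofReal I ≤
          (∫⁻ t in Ioc s0 s, f t ^ p) ^ (1 / p) * (∫⁻ t in Ioc s0 s, g t ^ q) ^ (1 / q) := by
        rw [hIof]
        simp_rw [hfg]
        exact hH
      have hIpow : ENNReal.ofReal (I ^ p) ≤
          (∫⁻ t in Ioc s0 s, f t ^ p) * ((∫⁻ t in Ioc s0 s, g t ^ q) ^ (p / q)) := by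
        rw [← ENNReal.ofReal_rpow_of_nonneg hI0 hp0.le]
        calc (ENNReal.ofReal I) ^ p
            ≤ ((∫⁻ t in Ioc s0 s, f t ^ p) ^ (1 / p) *
               (∫⁻ t in Ioc s0 s, g t ^ q) ^ (1 / q)) ^ p :=
              ENNReal.rpow_le_rpow hIle hp0.le
          _ = (∫⁻ t in Ioc s0 s, f t ^ p) * ((∫⁻ t in Ioc s0 s, g t ^ q) ^ (p / q)) := by
              rw [ENNReal.mul_rpow_of_nonneg _ _ hp0.le, ← ENNReal.rpow_mul, ← ENNReal.rpow_mul,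
                one_div_mul_cancel hp0.ne', ENNReal.rpow_one]
              congr 2
              field_simp
      have hgq : (∫⁻ t in Ioc s0 s, g t ^ q) ^ (p / q) ≤ D := by
        rw [hD_def]
        apply ENNReal.rpow_le_rpow _ (by positivity)
        have hgq_eq : ∀ t, g t ^ q = ENNReal.ofReal (Real.exp (-(μ₀ * q) * t)) := by
          intro t
          show ENNReal.ofReal (Real.exp (-μ₀ * t)) ^ q = _
          rw [ENNReal.ofReal_rpow_of_nonneg (Real.exp_pos _).le hq0.le, ← Real.exp_mul]
          ring_nf
        simp_rw [hgq_eq]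
        exact lintegral_mono_set Ioc_subset_Ioi_self
      have hfp : (∫⁻ t in Ioc s0 s, f t ^ p) = J θ := by
        rw [hJ_def]
        congr 1
        funext t
        show ENNReal.ofReal (Real.exp (μ₀ * t) * |dvds u t θ|) ^ p = _
        rw [ENNReal.ofReal_rpow_of_nonneg (by positivity) hp0.le,
          Real.mul_rpow (Real.exp_pos _).le (abs_nonneg _), ← Real.exp_mul]
        ring_nf
      calc ENNReal.ofReal (I ^ p)
          ≤ (∫⁻ t in Ioc s0 s, f t ^ p) * ((∫⁻ t in Ioc s0 s, g t ^ q) ^ (p / q)) := hIpow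
        _ ≤ J θ * D := by rw [hfp]; exact mul_le_mul_right hgq _
        _ = D * J θ := mul_comm _ _
    -- combine
    calc ENNReal.ofReal (vfun u s θ ^ p)
        ≤ ENNReal.ofReal (2 ^ p * (vfun u s0 θ ^ p + I ^ p)) := by
          apply ENNReal.ofReal_le_ofReal
          calc vfun u s θ ^ p ≤ (vfun u s0 θ + I) ^ p :=
                Real.rpow_le_rpow (hvf_pos s θ).le hvle hp0.le
            _ ≤ 2 ^ p * (vfun u s0 θ ^ p + I ^ p) :=
                add_rpow_le (hvf_pos s0 θ).le hI0 hp0.le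
      _ = ENNReal.ofReal (2 ^ p) * (ENNReal.ofReal (vfun u s0 θ ^ p)
            + ENNReal.ofReal (I ^ p)) := by
          rw [ENNReal.ofReal_mul (by positivity), ENNReal.ofReal_add
            (Real.rpow_nonneg (hvf_pos s0 θ).le p) (Real.rpow_nonneg hI0 p)]
      _ ≤ ENNReal.ofReal (2 ^ p) * (ENNReal.ofReal (vfun u s0 θ ^ p) + D * J θ) := by
          exact mul_le_mul_right (add_le_add_right hIp _) _
  -- integrate over θ
  have hJint : (∫⁻ θ, J θ ∂ν) ≤ ENNReal.ofReal (C / β * Real.exp (β * s)) := by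
    have hswap : (∫⁻ θ, J θ ∂ν) = ∫⁻ t in Ioc s0 s,
        (∫⁻ θ, ENNReal.ofReal (Real.exp (μ₀ * p * t) * |dvds u t θ| ^ p) ∂ν) := by
      rw [hJ_def]
      apply lintegral_lintegral_swap
      apply Measurable.aemeasurable
      apply ENNReal.measurable_ofReal.comp
      have h1 : Continuous (fun z : sphere (0 : En n) 1 × ℝ => dvds u z.2 z.1) :=
        dvds_continuous' hu
      have h2 : Continuous (fun z : sphere (0 : En n) 1 × ℝ => |dvds u z.2 z.1| ^ p) :=
        (cont_abs_rpow hp0).comp h1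
      exact ((Real.continuous_exp.comp (continuous_const.mul continuous_snd)).mul h2).measurable
    rw [hswap]
    have hbound : ∀ t ∈ Ioc s0 s,
        (∫⁻ θ, ENNReal.ofReal (Real.exp (μ₀ * p * t) * |dvds u t θ| ^ p) ∂ν)
          ≤ ENNReal.ofReal (C * Real.exp (β * t)) := by
      intro t ht
      have htS : S ≤ t := le_trans hSs0 ht.1.le
      have hcontp : Continuous (fun θ : sphere (0 : En n) 1 => |dvds u t θ| ^ p) :=
        (cont_abs_rpow hp0).comp (dvds_cont_theta hu t)
      have heval : (∫⁻ θ, ENNReal.ofReal (|dvds u t θ| ^ p) ∂ν)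
          = ENNReal.ofReal (∫ θ, |dvds u t θ| ^ p ∂ν) :=
        (ofReal_integral_eq_lintegral_ofReal (sphere_integrable hcontp)
          (Eventually.of_forall fun θ => Real.rpow_nonneg (abs_nonneg _) p)).symm
      calc (∫⁻ θ, ENNReal.ofReal (Real.exp (μ₀ * p * t) * |dvds u t θ| ^ p) ∂ν)
          = ENNReal.ofReal (Real.exp (μ₀ * p * t)) *
              (∫⁻ θ, ENNReal.ofReal (|dvds u t θ| ^ p) ∂ν) := by
            simp_rw [ENNReal.ofReal_mul (Real.exp_pos _).le]
            exact lintegral_const_mul' _ _ ENNReal.ofReal_ne_top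
        _ ≤ ENNReal.ofReal (Real.exp (μ₀ * p * t)) * ENNReal.ofReal (C * Real.exp (l * t)) := by
            rw [heval]
            exact mul_le_mul_right (ENNReal.ofReal_le_ofReal (hv t htS)) _
        _ = ENNReal.ofReal (C * Real.exp (β * t)) := by
            rw [← ENNReal.ofReal_mul (Real.exp_pos _).le]
            congr 1
            rw [mul_comm C, ← mul_assoc, ← Real.exp_add]
            rw [show μ₀ * p * t + l * t = β * t by rw [← hβ]; ring]
            ring
    calc (∫⁻ t in Ioc s0 s, (∫⁻ θ, ENNReal.ofReal
            (Real.exp (μ₀ * p * t) * |dvds u t θ| ^ p) ∂ν))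
        ≤ ∫⁻ t in Ioc s0 s, ENNReal.ofReal (C * Real.exp (β * t)) := by
          apply setLIntegral_mono_ae
          · apply Measurable.aemeasurable
            exact ENNReal.measurable_ofReal.comp ((continuous_const.mul
              (Real.continuous_exp.comp (continuous_const.mul continuous_id))).measurable)
          · exact Eventually.of_forall hbound
      _ = ENNReal.ofReal (∫ t in Ioc s0 s, C * Real.exp (β * t)) :=
          (ofReal_integral_eq_lintegral_ofReal
            ((continuous_const.mul (Real.continuous_exp.comp
              (continuous_const.mul continuous_id))).integrableOn_Ioc)
            (Eventually.of_forall fun t => mul_nonneg hC.le (Real.exp_pos _).le)).symm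
      _ ≤ ENNReal.ofReal (C / β * Real.exp (β * s)) :=
          ENNReal.ofReal_le_ofReal (exp_integral_bound hβ0 hC.le hs)
  calc (∫⁻ θ, ENNReal.ofReal (vfun u s θ ^ p) ∂ν)
      ≤ ∫⁻ θ, ENNReal.ofReal (2 ^ p) * (ENNReal.ofReal (vfun u s0 θ ^ p) + D * J θ) ∂ν :=
        lintegral_mono key
    _ = ENNReal.ofReal (2 ^ p) * (V0 + D * ∫⁻ θ, J θ ∂ν) := by
        rw [lintegral_const_mul' _ _ ENNReal.ofReal_ne_top]
        congr 1
        rw [lintegral_add_left]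
        · congr 1
          exact lintegral_const_mul' _ _ hD_ne
        · exact (ENNReal.measurable_ofReal.comp hvs0_cont.measurable)
    _ ≤ ENNReal.ofReal (2 ^ p) * (V0 + D * ENNReal.ofReal (C / β * Real.exp (β * s))) := by
        exact mul_le_mul_right (add_le_add_right (mul_le_mul_right hJint _) _) _
    _ = ENNReal.ofReal (2 ^ p) * V0 + ENNReal.ofReal (2 ^ p) * D *
          ENNReal.ofReal (C / β) * ENNReal.ofReal (Real.exp (β * s)) := by
        rw [mul_add, ENNReal.ofReal_mul (div_nonneg hC.le hβ0.le)]
        ring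

lemma measurable_rpow_const' (a : ℝ) : Measurable fun x : ℝ => x ^ a := by measurability

lemma tail_lintegral_ne_top {n : ℕ} (hn : 3 ≤ n) {u : En n → ℝ} (hu : ContDiff ℝ (⊤ : ℕ∞) u)
    (hu_pos : ∀ x, 0 < u x) {C l S : ℝ} (hC : 0 < C) (hl0 : 0 < l) (hl1 : l < 1)
    (hv : ∀ s : ℝ, S ≤ s →
      (∫ θ, |dvds u s θ| ^ (2 * (n : ℝ) / ((n : ℝ) - 2)) ∂((volume : Measure (En n)).toSphere))
        ≤ C * Real.exp (l * s))
    {R0 : ℝ} (hR01 : 1 ≤ R0) (hR0e : Real.exp (max S 0) ≤ R0) :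
    (∫⁻ x in {x : En n | R0 ≤ ‖x‖},
      ENNReal.ofReal (u x ^ (2 * (n : ℝ) / ((n : ℝ) - 2)) / ‖x‖)) ≠ ⊤ := by
  have hne : Nonempty (Fin n) := ⟨⟨0, by omega⟩⟩
  have hnt : Nontrivial (En n) := by infer_instance
  obtain ⟨E₀, E₁, hE₀, hE₁, hE⟩ := sphere_vfun_bound hn hu hu_pos hC hl0 hl1 hv
  have hn3 : (3 : ℝ) ≤ (n : ℝ) := by exact_mod_cast hn
  set p : ℝ := 2 * (n : ℝ) / ((n : ℝ) - 2) with hp_def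
  have hp1 : 1 < p := by rw [hp_def, lt_div_iff₀ (by linarith)]; linarith
  have hp0 : 0 < p := by linarith
  set β : ℝ := (1 + l) / 2 with hβ_def
  have hβ1 : β < 1 := by rw [hβ_def]; linarith
  set s0 : ℝ := max S 0 with hs0_def
  -- the function under the integral
  set G : En n → ℝ≥0∞ := {x : En n | R0 ≤ ‖x‖}.indicator
    (fun x => ENNReal.ofReal (u x ^ p / ‖x‖)) with hG_def
  have hAmeas : MeasurableSet {x : En n | R0 ≤ ‖x‖} :=
    (isClosed_le continuous_const continuous_norm).measurableSet
  have hup_cont : Continuous (fun x : En n => u x ^ p) := by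
    have heq : (fun x : En n => u x ^ p) = fun x => |u x| ^ p := by
      funext x; rw [abs_of_pos (hu_pos x)]
    rw [heq]; exact (cont_abs_rpow hp0).comp hu.continuous
  have hGmeas : Measurable G := by
    apply Measurable.indicator _ hAmeas
    exact ENNReal.measurable_ofReal.comp (hup_cont.measurable.div continuous_norm.measurable)
  -- pass to polar coordinates
  have hdim : Module.finrank ℝ (En n) = n := finrank_euclideanSpace_fin
  have hmp := (volume : Measure (En n)).measurePreserving_homeomorphUnitSphereProd
  rw [hdim] at hmp
  set ν := (volume : Measure (En n)).toSphere with hν_def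
  set Φ := homeomorphUnitSphereProd (En n) with hΦ_def
  have hsymm_meas : Measurable (fun z : sphere (0 : En n) 1 × Ioi (0 : ℝ) => G (Φ.symm z).val) :=
    hGmeas.comp (continuous_subtype_val.comp Φ.symm.continuous).measurable
  have step1 : (∫⁻ x in {x : En n | R0 ≤ ‖x‖}, ENNReal.ofReal (u x ^ p / ‖x‖))
      = ∫⁻ z, G ((Φ.symm z).val) ∂(ν.prod (Measure.volumeIoiPow (n - 1))) := by
    calc (∫⁻ x in {x : En n | R0 ≤ ‖x‖}, ENNReal.ofReal (u x ^ p / ‖x‖))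
        = ∫⁻ x, G x := (lintegral_indicator hAmeas _).symm
      _ = ∫⁻ x in ({(0 : En n)}ᶜ : Set (En n)), G x := by rw [restrict_compl_singleton]
      _ = ∫⁻ y : ({(0 : En n)}ᶜ : Set (En n)), G y ∂((volume : Measure (En n)).comap
            Subtype.val) :=
          (lintegral_subtype_comap (measurableSet_singleton (0 : En n)).compl G).symm
      _ = ∫⁻ z, G ((Φ.symm z).val) ∂(ν.prod (Measure.volumeIoiPow (n - 1))) := by
          rw [← hmp.lintegral_comp hsymm_meas]
          exact lintegral_congr fun y => by rw [Homeomorph.symm_apply_apply]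
  rw [step1]
  -- Tonelli
  have step2 : (∫⁻ z, G ((Φ.symm z).val) ∂(ν.prod (Measure.volumeIoiPow (n - 1))))
      = ∫⁻ ρ : Ioi (0 : ℝ), (∫⁻ θ : sphere (0 : En n) 1, G ((ρ : ℝ) • (θ : En n)) ∂ν)
          ∂(Measure.volumeIoiPow (n - 1)) := by
    rw [lintegral_prod_symm' _ hsymm_meas]
    rfl
  rw [step2]
  -- with density
  set Ψ : ℝ → ℝ≥0∞ := fun r =>
    ENNReal.ofReal (r ^ (n - 1 : ℕ)) * ∫⁻ θ : sphere (0 : En n) 1, G (r • (θ : En n)) ∂ν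
    with hΨ_def
  have hinner_meas : Measurable (fun r : ℝ =>
      ∫⁻ θ : sphere (0 : En n) 1, G (r • (θ : En n)) ∂ν) := by
    apply Measurable.lintegral_prod_right
    exact hGmeas.comp ((continuous_fst.smul
      (continuous_subtype_val.comp continuous_snd)).measurable)
  have step3 : (∫⁻ ρ : Ioi (0 : ℝ), (∫⁻ θ : sphere (0 : En n) 1, G ((ρ : ℝ) • (θ : En n)) ∂ν)
      ∂(Measure.volumeIoiPow (n - 1))) = ∫⁻ r in Ioi (0 : ℝ), Ψ r := by
    rw [Measure.volumeIoiPow, lintegral_withDensity_eq_lintegral_mul _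
      ((measurable_subtype_coe.pow_const _).ennreal_ofReal)
      (g := fun ρ : Ioi (0 : ℝ) => ∫⁻ θ : sphere (0 : En n) 1, G ((ρ : ℝ) • (θ : En n)) ∂ν)
      (hinner_meas.comp measurable_subtype_coe)]
    exact lintegral_subtype_comap measurableSet_Ioi Ψ
  rw [step3]
  -- pointwise bound
  set H : ℝ → ℝ≥0∞ := (Ici R0).indicator
    (fun r => E₀ * ENNReal.ofReal (r ^ (-2 : ℝ)) + E₁ * ENNReal.ofReal (r ^ (β - 2))) with hH_def
  have hΨ_le : ∀ r ∈ Ioi (0 : ℝ), Ψ r ≤ H r := by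
    intro r hr
    have hr0 : (0 : ℝ) < r := hr
    by_cases hrR : R0 ≤ r
    · -- main case
      have hnorm : ∀ θ : sphere (0 : En n) 1, ‖r • (θ : En n)‖ = r := by
        intro θ
        rw [norm_smul, Real.norm_eq_abs, abs_of_pos hr0,
          mem_sphere_zero_iff_norm.mp θ.2, mul_one]
      have hGval : ∀ θ : sphere (0 : En n) 1, G (r • (θ : En n))
          = ENNReal.ofReal (vfun u (Real.log r) θ ^ p * r ^ (-(n : ℝ) - 1)) := by
        intro θ
        rw [hG_def, Set.indicator_of_mem (by simp [hnorm θ, hrR])]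
        congr 1
        rw [hnorm θ]
        -- u (r•θ)^p / r = vfun^p * r^(-n-1)
        have hexp : Real.exp (((n : ℝ) - 2) * Real.log r / 2) = r ^ (((n : ℝ) - 2) / 2) := by
          rw [Real.rpow_def_of_pos hr0]; congr 1; ring
        have hvf : vfun u (Real.log r) θ ^ p = r ^ (n : ℝ) * u (r • (θ : En n)) ^ p := by
          have h2 : ((n : ℝ) - 2) / 2 * p = (n : ℝ) := by
            rw [hp_def]
            have hne2 : (n : ℝ) - 2 ≠ 0 := by linarith
            field_simp
          rw [vfun, Real.exp_log hr0, Real.mul_rpow (by positivity) (hu_pos _).le, hexp,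
            ← Real.rpow_mul hr0.le, h2]
        rw [hvf, mul_comm (r ^ (n : ℝ)), mul_assoc, ← Real.rpow_add hr0, div_eq_mul_inv,
          ← Real.rpow_neg_one r]
        congr 1
        congr 1
        ring
      have hlog : s0 ≤ Real.log r := by
        rw [hs0_def, Real.le_log_iff_exp_le hr0]
        exact le_trans hR0e hrR
      have hSv := hE (Real.log r) hlog
      have hrβ : Real.exp ((1 + l) / 2 * Real.log r) = r ^ β := by
        rw [Real.rpow_def_of_pos hr0, hβ_def]
        congr 1
        ring
      calc Ψ r = ENNReal.ofReal (r ^ (n - 1 : ℕ)) *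
            ∫⁻ θ, ENNReal.ofReal (vfun u (Real.log r) θ ^ p * r ^ (-(n : ℝ) - 1)) ∂ν := by
            rw [hΨ_def]
            exact congrArg _ (lintegral_congr fun θ => hGval θ)
        _ = ENNReal.ofReal (r ^ (n - 1 : ℕ)) *
            ((∫⁻ θ, ENNReal.ofReal (vfun u (Real.log r) θ ^ p) ∂ν) *
              ENNReal.ofReal (r ^ (-(n : ℝ) - 1))) := by
            congr 1
            rw [← lintegral_mul_const' _ _ ENNReal.ofReal_ne_top]
            exact lintegral_congr fun θ => ENNReal.ofReal_mul
              (Real.rpow_nonneg (mul_pos (Real.exp_pos _) (hu_pos _)).le p)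
        _ = ENNReal.ofReal (r ^ (n - 1 : ℕ)) * ENNReal.ofReal (r ^ (-(n : ℝ) - 1)) *
            ∫⁻ θ, ENNReal.ofReal (vfun u (Real.log r) θ ^ p) ∂ν := by ring
        _ = ENNReal.ofReal (r ^ (-2 : ℝ)) *
            ∫⁻ θ, ENNReal.ofReal (vfun u (Real.log r) θ ^ p) ∂ν := by
            congr 1
            rw [← ENNReal.ofReal_mul (by positivity), ← Real.rpow_natCast r (n - 1),
              ← Real.rpow_add hr0]
            congr 1
            have : ((n - 1 : ℕ) : ℝ) = (n : ℝ) - 1 := by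
              have : (1 : ℕ) ≤ n := by omega
              push_cast [Nat.cast_sub this]
              ring
            rw [this]
            ring
        _ ≤ ENNReal.ofReal (r ^ (-2 : ℝ)) *
              (E₀ + E₁ * ENNReal.ofReal (Real.exp ((1 + l) / 2 * Real.log r))) :=
            mul_le_mul_right hSv _
        _ = E₀ * ENNReal.ofReal (r ^ (-2 : ℝ)) + E₁ * ENNReal.ofReal (r ^ (β - 2)) := by
            rw [hrβ, mul_add]
            congr 1
            · ring
            · rw [show ENNReal.ofReal (r ^ (β - 2)) =
                ENNReal.ofReal (r ^ (-2 : ℝ)) * ENNReal.ofReal (r ^ β) by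
                  rw [← ENNReal.ofReal_mul (by positivity), ← Real.rpow_add hr0]
                  ring_nf]
              ring
        _ = H r := by
            simp only [hH_def]
            exact (Set.indicator_of_mem (show r ∈ Ici R0 from hrR)
              (fun r => E₀ * ENNReal.ofReal (r ^ (-2 : ℝ)) +
                E₁ * ENNReal.ofReal (r ^ (β - 2)))).symm
    · -- r < R0 : G vanishes
      have hGz : ∀ θ : sphere (0 : En n) 1, G (r • (θ : En n)) = 0 := by
        intro θ
        rw [hG_def, Set.indicator_of_notMem]
        simp only [Set.mem_setOf_eq, norm_smul, Real.norm_eq_abs, abs_of_pos hr0,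
          mem_sphere_zero_iff_norm.mp θ.2, mul_one]
        exact hrR
      rw [hΨ_def]
      simp only [hGz, lintegral_zero, mul_zero]
      exact zero_le'
  -- conclude finiteness
  have hfin : (∫⁻ r in Ioi (0 : ℝ), H r) < ⊤ := by
    have hsub : Ici R0 ∩ Ioi (0 : ℝ) ⊆ Ioi (1 / 2 : ℝ) := by
      intro r hr
      have : R0 ≤ r := hr.1
      simp only [mem_Ioi]
      linarith
    have hfin2 : ∀ (E : ℝ≥0∞) (a : ℝ), E ≠ ⊤ → a < -1 →
        (∫⁻ r in Ioi (1 / 2 : ℝ), E * ENNReal.ofReal (r ^ a)) < ⊤ := by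
      intro E a hEne ha
      rw [lintegral_const_mul' _ _ hEne]
      apply ENNReal.mul_lt_top hEne.lt_top
      have hint : IntegrableOn (fun r : ℝ => r ^ a) (Ioi (1 / 2 : ℝ)) :=
        integrableOn_Ioi_rpow_of_lt ha (by norm_num)
      rw [lt_top_iff_ne_top, lintegral_ofReal_ne_top_iff_integrable hint.aestronglyMeasurable]
      · exact hint
      · filter_upwards [ae_restrict_mem measurableSet_Ioi] with r hr
        exact Real.rpow_nonneg (by linarith [mem_Ioi.mp hr]) a
    calc (∫⁻ r in Ioi (0 : ℝ), H r)
        = ∫⁻ r in Ici R0 ∩ Ioi (0 : ℝ),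
            E₀ * ENNReal.ofReal (r ^ (-2 : ℝ)) + E₁ * ENNReal.ofReal (r ^ (β - 2)) := by
          rw [hH_def, lintegral_indicator measurableSet_Ici, Measure.restrict_restrict
            measurableSet_Ici]
      _ ≤ ∫⁻ r in Ioi (1 / 2 : ℝ),
            E₀ * ENNReal.ofReal (r ^ (-2 : ℝ)) + E₁ * ENNReal.ofReal (r ^ (β - 2)) :=
          lintegral_mono_set hsub
      _ < ⊤ := by
          rw [lintegral_add_left (f := fun r : ℝ => E₀ * ENNReal.ofReal (r ^ (-2 : ℝ))) (measurable_const.mul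
            ((measurable_rpow_const' (-2 : ℝ)).ennreal_ofReal))]
          exact ENNReal.add_lt_top.mpr ⟨hfin2 E₀ _ hE₀ (by norm_num),
            hfin2 E₁ _ hE₁ (by rw [hβ_def]; linarith)⟩
  exact ne_top_of_le_ne_top hfin.ne (setLIntegral_mono_ae
    (by
      apply Measurable.aemeasurable
      rw [hH_def]
      exact (Measurable.indicator ((measurable_const.mul
        ((measurable_rpow_const' (-2 : ℝ)).ennreal_ofReal)).add
        (measurable_const.mul
          ((measurable_rpow_const' (β - 2)).ennreal_ofReal)))
        measurableSet_Ici))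
    (Eventually.of_forall hΨ_le))

/-- Theorem 3.4 (Leung): under ∂K/∂r ≥ -c/r² and the growth condition (3.6) on ∂v/∂s,
P(u,r) is bounded below by -δ² for large r. -/
theorem stmt_4 (n : ℕ) (hn : 3 ≤ n) (u K : En n → ℝ)
    (hu_smooth : ContDiff ℝ (⊤ : ℕ∞) u) (hK_smooth : ContDiff ℝ (⊤ : ℕ∞) K)
    (hu_pos : ∀ x, 0 < u x)
    (a b : ℝ) (ha : 0 < a) (hab : a ≤ b)
    (hK_bd : ∃ R : ℝ, ∀ x : En n, R ≤ ‖x‖ → a ^ 2 ≤ K x ∧ K x ≤ b ^ 2)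
    (hpde : ∀ x, lap u x + K x * u x ^ (((n : ℝ) + 2) / ((n : ℝ) - 2)) = 0)
    (c : ℝ) (hc : 0 < c)
    (hKr : ∃ R : ℝ, ∀ r : ℝ, R ≤ r → ∀ θ : sphere (0 : En n) 1,
      -c / r ^ 2 ≤ radDeriv K (r • (θ : En n)))
    (C l : ℝ) (hC : 0 < C) (hl0 : 0 < l) (hl1 : l < 1)
    (hv : ∃ S : ℝ, ∀ s : ℝ, S ≤ s →
      (∫ θ, |dvds u s θ| ^ (2 * (n : ℝ) / ((n : ℝ) - 2)) ∂(sphereM n))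
        ≤ C * Real.exp (l * s)) :
    ∃ δ : ℝ, 0 < δ ∧ ∃ R : ℝ, ∀ r : ℝ, R ≤ r → -δ ^ 2 ≤ poho K u r := by
  obtain ⟨Rk, hKr'⟩ := hKr
  obtain ⟨S, hv'⟩ := hv
  have hne : Nonempty (Fin n) := ⟨⟨0, by omega⟩⟩
  have hnt : Nontrivial (En n) := by infer_instance
  have hn3 : (3 : ℝ) ≤ (n : ℝ) := by exact_mod_cast hn
  set p : ℝ := 2 * (n : ℝ) / ((n : ℝ) - 2) with hp_def
  have hp1 : 1 < p := by rw [hp_def, lt_div_iff₀ (by linarith)]; linarith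
  have hp0 : 0 < p := by linarith
  have hv'' : ∀ s : ℝ, S ≤ s →
      (∫ θ, |dvds u s θ| ^ (2 * (n : ℝ) / ((n : ℝ) - 2))
          ∂((volume : Measure (En n)).toSphere)) ≤ C * Real.exp (l * s) := hv'
  set R0 : ℝ := max (max Rk 1) (Real.exp (max S 0)) with hR0_def
  have hR01 : 1 ≤ R0 := le_trans (le_max_right Rk 1) (le_max_left _ _)
  have hR0e : Real.exp (max S 0) ≤ R0 := le_max_right _ _
  have hRk : Rk ≤ R0 := le_trans (le_max_left Rk 1) (le_max_left _ _)
  have hR00 : 0 < R0 := by linarith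
  have hΛ := tail_lintegral_ne_top hn hu_smooth hu_pos hC hl0 hl1 hv'' hR01 hR0e
  set Λ : ℝ≥0∞ := ∫⁻ x in {x : En n | R0 ≤ ‖x‖}, ENNReal.ofReal (u x ^ p / ‖x‖) with hΛ_def
  set M : ℝ := Λ.toReal with hM_def
  -- the Pohozaev integrand
  set g : En n → ℝ := fun x => (inner ℝ x (gradient K x) : ℝ) * u x ^ p with hg_def
  have hg_eq : ∀ x : En n, (inner ℝ x (gradient K x) : ℝ) = fderiv ℝ K x x := by
    intro x
    rw [real_inner_comm]
    exact InnerProductSpace.toDual_symm_apply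
  have hup_cont : Continuous (fun x : En n => u x ^ p) := by
    have heq : (fun x : En n => u x ^ p) = fun x => |u x| ^ p := by
      funext x; rw [abs_of_pos (hu_pos x)]
    rw [heq]; exact (cont_abs_rpow hp0).comp hu_smooth.continuous
  have hfKx_cont : Continuous (fun x : En n => fderiv ℝ K x x) :=
    isBoundedBilinearMap_apply.continuous.comp
      ((hK_smooth.continuous_fderiv (by simp)).prodMk continuous_id)
  have hg_cont : Continuous g := by
    rw [hg_def]
    have heq : (fun x : En n => (inner ℝ x (gradient K x) : ℝ) * u x ^ p)
        = fun x => fderiv ℝ K x x * u x ^ p := by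
      funext x; rw [hg_eq x]
    rw [heq]
    exact hfKx_cont.mul hup_cont
  have h_int_ball : ∀ r : ℝ, IntegrableOn g (ball (0 : En n) r) := by
    intro r
    exact (hg_cont.continuousOn.integrableOn_compact (isCompact_closedBall _ _)).mono_set
      ball_subset_closedBall
  set B0 : ℝ := ∫ x in ball (0 : En n) R0, g x with hB0_def
  set κ : ℝ := ((n : ℝ) - 2) / (2 * (n : ℝ)) with hκ_def
  have hκ0 : 0 ≤ κ := by
    rw [hκ_def]
    apply div_nonneg <;> linarith
  -- main lower bound for r ≥ R0
  have hmain : ∀ r : ℝ, R0 ≤ r → κ * (B0 - c * M) ≤ poho K u r := by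
    intro r hr
    set ann : Set (En n) := ball (0 : En n) r \ ball (0 : En n) R0 with hann_def
    have hann_meas : MeasurableSet ann := measurableSet_ball.diff measurableSet_ball
    have hsub : ann ⊆ {x : En n | R0 ≤ ‖x‖} := by
      intro x hx
      have h1 := hx.2
      simp only [mem_ball, dist_zero_right, not_lt] at h1
      exact h1
    -- pointwise lower bound on the annulus
    have hpt : ∀ x ∈ ann, -(c * (u x ^ p / ‖x‖)) ≤ g x := by
      intro x hx
      have hxR : R0 ≤ ‖x‖ := hsub hx
      have hx0 : (0 : ℝ) < ‖x‖ := by linarith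
      have hxne : ‖x‖ ≠ 0 := hx0.ne'
      have hθ : ‖x‖⁻¹ • x ∈ sphere (0 : En n) 1 := by
        rw [mem_sphere_zero_iff_norm, norm_smul, norm_inv, norm_norm,
          inv_mul_cancel₀ hxne]
      have hKrx := hKr' ‖x‖ (le_trans hRk hxR) ⟨‖x‖⁻¹ • x, hθ⟩
      rw [show (‖x‖ • ((⟨‖x‖⁻¹ • x, hθ⟩ : sphere (0 : En n) 1) : En n)) = x from
        smul_inv_smul₀ hxne x] at hKrx
      have hrad : radDeriv K x = ‖x‖⁻¹ * fderiv ℝ K x x := by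
        rw [radDeriv, (fderiv ℝ K x).map_smul, smul_eq_mul]
      rw [hrad] at hKrx
      have e1 : ‖x‖ * (‖x‖⁻¹ * fderiv ℝ K x x) = fderiv ℝ K x x := by
        field_simp
      have e2 : ‖x‖ * (-c / ‖x‖ ^ 2) = -(c / ‖x‖) := by
        field_simp
      have h5 : -(c / ‖x‖) ≤ fderiv ℝ K x x := by
        have h6 := mul_le_mul_of_nonneg_left hKrx hx0.le
        rw [e1, e2] at h6
        exact h6
      have h7 : -(c / ‖x‖) * u x ^ p ≤ fderiv ℝ K x x * u x ^ p :=
        mul_le_mul_of_nonneg_right h5 (Real.rpow_nonneg (hu_pos x).le p)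
      have h8 : -(c / ‖x‖) * u x ^ p = -(c * (u x ^ p / ‖x‖)) := by ring
      rw [h8] at h7
      rw [hg_def]
      simp only
      rw [hg_eq x]
      exact h7
    -- integrability on the annulus
    have h_int_ann : IntegrableOn g ann := (h_int_ball r).mono_set diff_subset
    have h_int_h : IntegrableOn (fun x => c * (u x ^ p / ‖x‖)) ann := by
      have hs'c : IsCompact (closedBall (0 : En n) r \ ball (0 : En n) R0) :=
        (isCompact_closedBall _ _).diff isOpen_ball
      have hconth : ContinuousOn (fun x : En n => c * (u x ^ p / ‖x‖))
          (closedBall (0 : En n) r \ ball (0 : En n) R0) := by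
        apply continuousOn_const.mul
        apply hup_cont.continuousOn.div continuous_norm.continuousOn
        intro x hx
        have h1 := hx.2
        simp only [mem_ball, dist_zero_right, not_lt] at h1
        have : (0 : ℝ) < ‖x‖ := by linarith
        exact this.ne'
      exact (hconth.integrableOn_compact hs'c).mono_set
        (diff_subset_diff_left ball_subset_closedBall)
    -- integral bound on annulus
    have hann_ge : -(c * M) ≤ ∫ x in ann, g x := by
      have h6 : ∫ x in ann, -(c * (u x ^ p / ‖x‖)) ≤ ∫ x in ann, g x :=
        setIntegral_mono_on h_int_h.neg h_int_ann hann_meas hpt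
      rw [integral_neg] at h6
      have h7 : ∫ x in ann, c * (u x ^ p / ‖x‖) ≤ c * M := by
        rw [integral_const_mul]
        apply mul_le_mul_of_nonneg_left _ hc.le
        have h8 : ∫ x in ann, u x ^ p / ‖x‖
            = (∫⁻ x in ann, ENNReal.ofReal (u x ^ p / ‖x‖)).toReal :=
          integral_eq_lintegral_of_nonneg_ae
            (Eventually.of_forall fun x =>
              div_nonneg (Real.rpow_nonneg (hu_pos x).le p) (norm_nonneg x))
            (hup_cont.measurable.div continuous_norm.measurable).aestronglyMeasurable
        rw [h8, hM_def]
        exact ENNReal.toReal_mono hΛ (lintegral_mono_set hsub)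
      linarith
    -- splitting the ball
    have hunion : ball (0 : En n) R0 ∪ ann = ball (0 : En n) r :=
      union_diff_cancel (ball_subset_ball hr)
    have hsplit : ∫ x in ball (0 : En n) r, g x = B0 + ∫ x in ann, g x := by
      rw [← hunion, setIntegral_union disjoint_sdiff_right hann_meas
        ((h_int_ball r).mono_set (fun x hx => hunion ▸ mem_union_left _ hx)) h_int_ann]
    have hpoho : poho K u r = κ * ∫ x in ball (0 : En n) r, g x := rfl
    rw [hpoho, hsplit]
    apply mul_le_mul_of_nonneg_left _ hκ0
    linarith
  -- choose δ
  refine ⟨Real.sqrt (|κ * (B0 - c * M)| + 1), Real.sqrt_pos.2 (by positivity), R0,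
    fun r hr => ?_⟩
  have hδ2 : Real.sqrt (|κ * (B0 - c * M)| + 1) ^ 2 = |κ * (B0 - c * M)| + 1 :=
    Real.sq_sqrt (by positivity)
  rw [hδ2]
  have h1 := neg_abs_le (κ * (B0 - c * M))
  have h2 := hmain r hr
  linarith
end
end

section
/- Let n ≥ 3 be an integer and let u be a positive C¹ function on ℝⁿ \ {0}. Suppose there exist positive constants C and λ ∈ (0,1) such that ∫_{S^{n-1}} |∂v/∂s|^{2n/(n-2)}(s,θ) dθ ≤ C e^{λ s} for all sufficiently large s. Then for every ε > 0 with ε + λ < 1 there is a positive constant C₇ such that ∫_{S_r} u^{2n/(n-2)} dS ≤ C₇ r^{−ε} for all sufficiently large r, where ∫_{S_r} u^{2n/(n-2)} dS = r^{n-1} ∫_{S^{n-1}} u^{2n/(n-2)}(rθ) dθ. -/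
/-!
Put `p = 2n/(n-2)`. Since `v(s, θ) = v(S, θ) + ∫_S^s ∂v/∂t dt`, convexity of `x ↦ x^p` and Hölder's
inequality in `t`, integrated over the sphere and combined with the hypothesis, give
`∫ v(s)^p dθ ≤ 2^(p-1) (∫ v(S)^p dθ + (s - S)^p C e^(λs))`. As `v^p = e^(ns) u^p`, the spherical
integral at radius `r = e^s` equals `e^(-s) ∫ v(s)^p dθ = O(s^p e^((λ-1)s))`, which is `o(e^(-εs))`
because `ε + λ < 1`.
-/

open MeasureTheory Metric Real Set Filter

noncomputable section

open scoped NNReal Topology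

lemma add_rpow_le_two_rpow_mul {a b p : ℝ} (ha : 0 ≤ a) (hb : 0 ≤ b) (hp : 1 ≤ p) :
    (a + b) ^ p ≤ 2 ^ (p - 1) * (a ^ p + b ^ p) := by
  lift a to ℝ≥0 using ha
  lift b to ℝ≥0 using hb
  exact_mod_cast NNReal.rpow_add_le_mul_rpow_add_rpow a b hp

lemma setIntegral_Ioc_abs_rpow_le {f : ℝ → ℝ} (hf : Continuous f) {a b p : ℝ} (hab : a ≤ b)
    (hp : 1 < p) :
    (∫ t in Ioc a b, |f t|) ^ p ≤ (b - a) ^ (p - 1) * ∫ t in Ioc a b, |f t| ^ p := by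
  set q := p.conjExponent
  have hpq : p.HolderConjugate q := .conjExponent hp
  have hf_memLp : MemLp (fun t => |f t|) (ENNReal.ofReal p) (volume.restrict (Ioc a b)) := by
    obtain ⟨M, hM⟩ := isCompact_Icc.exists_bound_of_continuousOn (s := Icc a b) hf.continuousOn
    refine MemLp.of_bound hf.abs.aestronglyMeasurable M ?_
    filter_upwards [ae_restrict_mem measurableSet_Ioc] with t ht
    simpa using hM t (Ioc_subset_Icc_self ht)
  have h_holder := integral_mul_le_Lp_mul_Lq_of_nonneg hpq
    (.of_forall fun t => abs_nonneg (f t)) (.of_forall fun _ => zero_le_one) hf_memLp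
    (memLp_const 1)
  simp only [mul_one, one_rpow, integral_const, measureReal_restrict_apply_univ,
    volume_real_Ioc_of_le hab, smul_eq_mul] at h_holder
  have hI : 0 ≤ ∫ t in Ioc a b, |f t| ^ p := integral_nonneg fun t => by positivity
  calc (∫ t in Ioc a b, |f t|) ^ p
      ≤ ((∫ t in Ioc a b, |f t| ^ p) ^ (1 / p) * (b - a) ^ (1 / q)) ^ p :=
        rpow_le_rpow (integral_nonneg fun t => abs_nonneg _) h_holder hpq.nonneg
    _ = (b - a) ^ (p - 1) * ∫ t in Ioc a b, |f t| ^ p := by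
        rw [mul_rpow (by positivity) (rpow_nonneg (by linarith) _), ← rpow_mul hI,
          ← rpow_mul (by linarith), one_div_mul_cancel hpq.ne_zero, rpow_one, one_div,
          ← div_eq_inv_mul, hpq.div_conj_eq_sub_one, mul_comm]

lemma abs_rpow_le_of_hasDerivAt {g g' : ℝ → ℝ} (hg : ∀ t, HasDerivAt g (g' t) t)
    (hg' : Continuous g') {a b p : ℝ} (hab : a ≤ b) (hp : 1 < p) :
    |g b| ^ p ≤ 2 ^ (p - 1) * (|g a| ^ p + (b - a) ^ (p - 1) * ∫ t in Ioc a b, |g' t| ^ p) := by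
  have h_ftc : g b = g a + ∫ t in a..b, g' t := by
    rw [intervalIntegral.integral_eq_sub_of_hasDerivAt (fun t _ => hg t)
      (hg'.intervalIntegrable a b)]
    ring
  have h_abs : |g b| ≤ |g a| + ∫ t in Ioc a b, |g' t| := by
    rw [h_ftc, ← intervalIntegral.integral_of_le hab]
    exact (abs_add_le _ _).trans
      (add_le_add_right (intervalIntegral.abs_integral_le_integral_abs hab) _)
  calc |g b| ^ p ≤ (|g a| + ∫ t in Ioc a b, |g' t|) ^ p :=
        rpow_le_rpow (abs_nonneg _) h_abs (by linarith)
    _ ≤ 2 ^ (p - 1) * (|g a| ^ p + (∫ t in Ioc a b, |g' t|) ^ p) :=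
        add_rpow_le_two_rpow_mul (abs_nonneg _) (integral_nonneg fun _ => abs_nonneg _) hp.le
    _ ≤ 2 ^ (p - 1) * (|g a| ^ p + (b - a) ^ (p - 1) * ∫ t in Ioc a b, |g' t| ^ p) := by
        gcongr
        exact setIntegral_Ioc_abs_rpow_le hg' hab hp

section CompactFiber

variable {X : Type*} [TopologicalSpace X] [CompactSpace X] [MeasurableSpace X]
  [OpensMeasurableSpace X] {μ : Measure X} [IsFiniteMeasure μ]

lemma integral_abs_rpow_le_of_hasDerivAt {v v' : ℝ → X → ℝ}
    (hv : ∀ t x, HasDerivAt (v · x) (v' t x) t) (hv' : Continuous (Function.uncurry v'))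
    {a b p M : ℝ} (hva : Integrable (fun x => |v a x| ^ p) μ) (hab : a ≤ b) (hp : 1 < p)
    (hM : ∀ t ∈ Ioc a b, ∫ x, |v' t x| ^ p ∂μ ≤ M) :
    ∫ x, |v b x| ^ p ∂μ ≤ 2 ^ (p - 1) * (∫ x, |v a x| ^ p ∂μ + (b - a) ^ p * M) := by
  set F : X → ℝ → ℝ := fun x t => |v' t x| ^ p
  have hF_cont : Continuous (Function.uncurry F) :=
    (hv'.comp continuous_swap).abs.rpow_const fun _ => Or.inr (by linarith)
  have hF_int : Integrable (Function.uncurry F) (μ.prod (volume.restrict (Ioc a b))) := by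
    rw [← Measure.restrict_univ (μ := μ), Measure.prod_restrict]
    exact (hF_cont.continuousOn.integrableOn_compact' (isCompact_univ.prod isCompact_Icc)
      (MeasurableSet.univ.prod measurableSet_Icc)).mono_set
      (prod_mono subset_rfl Ioc_subset_Icc_self)
  have h_fubini : ∫ x, (∫ t in Ioc a b, F x t) ∂μ ≤ (b - a) * M := by
    rw [integral_integral_swap hF_int]
    refine (le_abs_self _).trans ?_
    have := norm_setIntegral_le_of_norm_le_const (f := fun t => ∫ x, F x t ∂μ)
      (measure_Ioc_lt_top (μ := volume)) fun t ht => by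
        rw [Real.norm_of_nonneg (integral_nonneg fun x => by positivity)]
        exact hM t ht
    rwa [volume_real_Ioc_of_le hab, mul_comm] at this
  have h_pointwise : ∀ x, |v b x| ^ p
      ≤ 2 ^ (p - 1) * (|v a x| ^ p + (b - a) ^ (p - 1) * ∫ t in Ioc a b, F x t) := fun x =>
    abs_rpow_le_of_hasDerivAt (hv · x) (hv'.comp (continuous_id.prodMk continuous_const)) hab hp
  have hsub : 0 ≤ b - a := by linarith
  have hG_int : Integrable (fun x => ∫ t in Ioc a b, F x t) μ := hF_int.integral_prod_left
  calc ∫ x, |v b x| ^ p ∂μ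
      ≤ ∫ x, 2 ^ (p - 1) * (|v a x| ^ p + (b - a) ^ (p - 1) * ∫ t in Ioc a b, F x t) ∂μ :=
        integral_mono_of_nonneg (.of_forall fun x => by positivity)
          ((hva.add (hG_int.const_mul _)).const_mul _)
          (.of_forall h_pointwise)
    _ = 2 ^ (p - 1) * (∫ x, |v a x| ^ p ∂μ
          + (b - a) ^ (p - 1) * ∫ x, (∫ t in Ioc a b, F x t) ∂μ) := by
        rw [integral_const_mul, integral_add hva (hG_int.const_mul _),
          integral_const_mul]
    _ ≤ 2 ^ (p - 1) * (∫ x, |v a x| ^ p ∂μ + (b - a) ^ (p - 1) * ((b - a) * M)) := by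
        gcongr
    _ = 2 ^ (p - 1) * (∫ x, |v a x| ^ p ∂μ + (b - a) ^ p * M) := by
        rw [← mul_assoc, ← rpow_add_one' hsub (by linarith), sub_add_cancel]

end CompactFiber

lemma tendsto_sub_rpow_mul_exp_neg_mul_atTop_nhds_zero (S p : ℝ) {b : ℝ} (hb : 0 < b) :
    Tendsto (fun s => (s - S) ^ p * exp (-b * s)) atTop (𝓝 0) := by
  have h := ((tendsto_rpow_mul_exp_neg_mul_atTop_nhds_zero p b hb).comp
    (tendsto_atTop_add_const_right atTop (-S) tendsto_id)).mul_const (exp (-b * S))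
  rw [zero_mul] at h
  refine h.congr fun s => ?_
  simp only [Function.comp_apply, id, mul_assoc, ← exp_add]
  ring_nf

lemma eventually_exp_neg_mul_le_exp_neg_mul {K A C S p l ε : ℝ} (hε : ε < 1) (hεl : ε + l < 1) :
    ∀ᶠ s in atTop, exp (-s) * (K * (A + (s - S) ^ p * (C * exp (l * s)))) ≤ exp (-(ε * s)) := by
  have h_lim : Tendsto (fun s => K * (A * exp (-(1 - ε) * s)
      + C * ((s - S) ^ p * exp (-(1 - l - ε) * s)))) atTop (𝓝 0) := by
    have h_exp := tendsto_sub_rpow_mul_exp_neg_mul_atTop_nhds_zero 0 0 (b := 1 - ε) (by linarith)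
    have h_poly_exp := tendsto_sub_rpow_mul_exp_neg_mul_atTop_nhds_zero S p (b := 1 - l - ε)
      (by linarith)
    simpa using ((h_exp.const_mul A).add (h_poly_exp.const_mul C)).const_mul K
  filter_upwards [h_lim.eventually (ge_mem_nhds zero_lt_one)] with s hs
  have h1 : exp (-(ε * s)) * exp (-(1 - ε) * s) = exp (-s) := by rw [← exp_add]; ring_nf
  have h2 : exp (-(ε * s)) * exp (-(1 - l - ε) * s) = exp (-s) * exp (l * s) := by
    rw [← exp_add, ← exp_add]; ring_nf
  calc exp (-s) * (K * (A + (s - S) ^ p * (C * exp (l * s))))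
      = exp (-(ε * s)) * (K * (A * exp (-(1 - ε) * s)
          + C * ((s - S) ^ p * exp (-(1 - l - ε) * s)))) := by
        linear_combination -(K * A) * h1 - K * C * (s - S) ^ p * h2
    _ ≤ exp (-(ε * s)) := mul_le_of_le_one_right (exp_pos _).le hs

section Cylinder

variable {n : ℕ} {u : En n → ℝ}

instance isFiniteMeasure_sphereM : IsFiniteMeasure (sphereM n) := by
  unfold sphereM
  infer_instance

lemma exp_smul_mem_compl_zero (t : ℝ) (θ : sphere (0 : En n) 1) :
    exp t • (θ : En n) ∈ ({0}ᶜ : Set (En n)) :=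
  smul_ne_zero (exp_pos t).ne' (ne_zero_of_mem_unit_sphere θ)

lemma continuous_exp_smul_sphere :
    Continuous fun z : ℝ × sphere (0 : En n) 1 => exp z.1 • (z.2 : En n) := by
  fun_prop

lemma hasDerivAt_vfun (hu : ContDiffOn ℝ 1 u {0}ᶜ) (t : ℝ) (θ : sphere (0 : En n) 1) :
    HasDerivAt (vfun u · θ)
      (((n : ℝ) - 2) / 2 * exp (((n : ℝ) - 2) * t / 2) * u (exp t • (θ : En n))
        + exp (((n : ℝ) - 2) * t / 2) * fderiv ℝ u (exp t • (θ : En n)) (exp t • (θ : En n)))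
      t := by
  have h_exp : HasDerivAt (fun t : ℝ => exp (((n : ℝ) - 2) * t / 2))
      (((n : ℝ) - 2) / 2 * exp (((n : ℝ) - 2) * t / 2)) t := by
    simpa [mul_comm, mul_div_assoc] using
      ((hasDerivAt_id t).const_mul ((n : ℝ) - 2)).div_const 2 |>.exp
  have h_u : HasDerivAt (fun t : ℝ => u (exp t • (θ : En n)))
      (fderiv ℝ u (exp t • (θ : En n)) (exp t • (θ : En n))) t :=
    ((hu.differentiableOn one_ne_zero).differentiableAt
      (isOpen_compl_singleton.mem_nhds (exp_smul_mem_compl_zero t θ))).hasFDerivAt.comp_hasDerivAt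
      t ((hasDerivAt_exp t).smul_const (θ : En n))
  exact h_exp.mul h_u

lemma hasDerivAt_vfun_dvds (hu : ContDiffOn ℝ 1 u {0}ᶜ) (t : ℝ) (θ : sphere (0 : En n) 1) :
    HasDerivAt (vfun u · θ) (dvds u t θ) t :=
  (hasDerivAt_vfun hu t θ).differentiableAt.hasDerivAt

lemma continuous_uncurry_dvds (hu : ContDiffOn ℝ 1 u {0}ᶜ) :
    Continuous (Function.uncurry (dvds u)) := by
  have hu_cont : Continuous fun z : ℝ × sphere (0 : En n) 1 => u (exp z.1 • (z.2 : En n)) :=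
    hu.continuousOn.comp_continuous continuous_exp_smul_sphere
      fun z => exp_smul_mem_compl_zero z.1 z.2
  have hDu_cont :
      Continuous fun z : ℝ × sphere (0 : En n) 1 => fderiv ℝ u (exp z.1 • (z.2 : En n)) :=
    (hu.continuousOn_fderiv_of_isOpen isOpen_compl_singleton le_rfl).comp_continuous
      continuous_exp_smul_sphere fun z => exp_smul_mem_compl_zero z.1 z.2
  rw [show Function.uncurry (dvds u) = _ from funext fun z => (hasDerivAt_vfun hu z.1 z.2).deriv]
  exact ((continuous_const.mul (by fun_prop)).mul hu_cont).add
    ((by fun_prop : Continuous fun z : ℝ × sphere (0 : En n) 1 => exp (((n : ℝ) - 2) * z.1 / 2)).mul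
      (hDu_cont.clm_apply continuous_exp_smul_sphere))

lemma continuous_vfun (hu : ContinuousOn u {0}ᶜ) (s : ℝ) : Continuous (vfun u s) :=
  (continuous_const.mul (hu.comp_continuous (by fun_prop) (exp_smul_mem_compl_zero s)))

lemma vfun_rpow (hn : (n : ℝ) ≠ 2) (hu : ∀ x, x ≠ 0 → 0 ≤ u x) (s : ℝ) (θ : sphere (0 : En n) 1) :
    |vfun u s θ| ^ (2 * (n : ℝ) / ((n : ℝ) - 2))
      = exp (n * s) * u (exp s • (θ : En n)) ^ (2 * (n : ℝ) / ((n : ℝ) - 2)) := by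
  have hn2 : (n : ℝ) - 2 ≠ 0 := sub_ne_zero.2 hn
  rw [vfun, abs_of_nonneg (mul_nonneg (exp_pos _).le (hu _ (exp_smul_mem_compl_zero s θ))),
    mul_rpow (exp_pos _).le (hu _ (exp_smul_mem_compl_zero s θ)), ← exp_mul]
  congr 2
  field_simp

lemma pow_mul_integral_sphere_eq (hn : 3 ≤ n) (hu : ∀ x, x ≠ 0 → 0 ≤ u x) (s : ℝ) :
    exp s ^ (n - 1) * ∫ θ, u (exp s • (θ : En n)) ^ (2 * (n : ℝ) / ((n : ℝ) - 2)) ∂sphereM n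
      = exp (-s) * ∫ θ, |vfun u s θ| ^ (2 * (n : ℝ) / ((n : ℝ) - 2)) ∂sphereM n := by
  have hn' : (n : ℝ) ≠ 2 := by norm_cast; omega
  simp_rw [vfun_rpow hn' hu, integral_const_mul, ← mul_assoc, ← exp_nat_mul, ← exp_add]
  congr 2
  rw [Nat.cast_sub (by omega)]
  ring

end Cylinder

theorem stmt_5_general (n : ℕ) (hn : 3 ≤ n) (u : En n → ℝ)
    (hu_reg : ContDiffOn ℝ 1 u {(0 : En n)}ᶜ)
    (hu_pos : ∀ x : En n, x ≠ 0 → 0 < u x)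
    (C l : ℝ) (hC : 0 < C) (hl0 : 0 < l)
    (hv : ∃ S : ℝ, ∀ s : ℝ, S ≤ s →
      (∫ θ, |dvds u s θ| ^ (2 * (n : ℝ) / ((n : ℝ) - 2)) ∂(sphereM n))
        ≤ C * Real.exp (l * s)) :
    ∀ ε : ℝ, 0 < ε → ε + l < 1 →
      ∃ C₇ : ℝ, 0 < C₇ ∧ ∃ R : ℝ, ∀ r : ℝ, R ≤ r →
        r ^ (n - 1) * (∫ θ, u (r • (θ : En n)) ^ (2 * (n : ℝ) / ((n : ℝ) - 2)) ∂(sphereM n))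
          ≤ C₇ * r ^ (-ε) := by
  intro ε hε hεl
  obtain ⟨S, hS⟩ := hv
  set p := 2 * (n : ℝ) / ((n : ℝ) - 2)
  have hp : 1 < p := by
    have : (3 : ℝ) ≤ n := by exact_mod_cast hn
    rw [lt_div_iff₀ (by linarith)]
    linarith
  have h_growth : ∀ s, S ≤ s → ∫ θ, |vfun u s θ| ^ p ∂sphereM n
      ≤ 2 ^ (p - 1) * (∫ θ, |vfun u S θ| ^ p ∂sphereM n + (s - S) ^ p * (C * exp (l * s))) :=
    fun s hs => integral_abs_rpow_le_of_hasDerivAt (hasDerivAt_vfun_dvds hu_reg)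
      (continuous_uncurry_dvds hu_reg)
      (((continuous_vfun hu_reg.continuousOn S).abs.rpow_const fun _ => Or.inr (by linarith))
        |>.integrable_of_hasCompactSupport (HasCompactSupport.of_compactSpace _))
      hs hp fun t ht => (hS t ht.1.le).trans (by gcongr; exact ht.2)
  have h_decay := eventually_exp_neg_mul_le_exp_neg_mul (K := 2 ^ (p - 1))
    (A := ∫ θ, |vfun u S θ| ^ p ∂sphereM n) (C := C) (S := S) (p := p) (by linarith) hεl
  obtain ⟨R, hR⟩ := eventually_atTop.1 <| (eventually_gt_atTop 0).and <|
    tendsto_log_atTop.eventually ((eventually_ge_atTop S).and h_decay)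
  refine ⟨1, one_pos, R, fun r hr => ?_⟩
  obtain ⟨hr0, hSr, h_decay_r⟩ := hR r hr
  rw [← exp_log hr0, pow_mul_integral_sphere_eq hn (fun x hx => (hu_pos x hx).le), one_mul,
    ← exp_mul, mul_neg, mul_comm _ ε]
  exact (mul_le_mul_of_nonneg_left (h_growth _ hSr) (exp_pos _).le).trans h_decay_r

/-- The key estimate (3.7) in the proof of Theorem 3.4: the spherical integral
∫_{S_r} u^{2n/(n-2)} dS decays like r^{-ε}. -/
theorem stmt_5 (n : ℕ) (hn : 3 ≤ n) (u : En n → ℝ)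
    (hu_reg : ContDiffOn ℝ 1 u {(0 : En n)}ᶜ)
    (hu_pos : ∀ x : En n, x ≠ 0 → 0 < u x)
    (C l : ℝ) (hC : 0 < C) (hl0 : 0 < l) (hl1 : l < 1)
    (hv : ∃ S : ℝ, ∀ s : ℝ, S ≤ s →
      (∫ θ, |dvds u s θ| ^ (2 * (n : ℝ) / ((n : ℝ) - 2)) ∂(sphereM n))
        ≤ C * Real.exp (l * s)) :
    ∀ ε : ℝ, 0 < ε → ε + l < 1 →
      ∃ C₇ : ℝ, 0 < C₇ ∧ ∃ R : ℝ, ∀ r : ℝ, R ≤ r →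
        r ^ (n - 1) * (∫ θ, u (r • (θ : En n)) ^ (2 * (n : ℝ) / ((n : ℝ) - 2)) ∂(sphereM n))
          ≤ C₇ * r ^ (-ε) :=
  stmt_5_general n hn u hu_reg hu_pos C l hC hl0 hv
end
end

section
/- Let n ≥ 3 be an integer, λ > 0 a real number, and x₀ ∈ ℝⁿ. Then the function u(x) = α_n (λ/(λ² + |x − x₀|²))^{(n-2)/2}, where α_n = [n(n-2)]^{(n-2)/4}, is a smooth positive function on ℝⁿ satisfying Δu + u^{(n+2)/(n-2)} = 0 on ℝⁿ. -/
open MeasureTheory Metric Real Set Filter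

noncomputable section

/-- The standard bubble ū(|x - x₀|, λ) is a smooth positive solution of
Δu + u^{(n+2)/(n-2)} = 0 on ℝⁿ. -/
theorem stmt_8 (n : ℕ) (hn : 3 ≤ n) (lam : ℝ) (hlam : 0 < lam) (x₀ : En n)
    (u : En n → ℝ)
    (hu : u = fun x => ((n : ℝ) * ((n : ℝ) - 2)) ^ (((n : ℝ) - 2) / 4) *
      (lam / (lam ^ 2 + ‖x - x₀‖ ^ 2)) ^ (((n : ℝ) - 2) / 2)) :
    ContDiff ℝ (⊤ : ℕ∞) u ∧ (∀ x, 0 < u x) ∧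
      ∀ x, lap u x + u x ^ (((n : ℝ) + 2) / ((n : ℝ) - 2)) = 0 := by
  have hn3 : (3:ℝ) ≤ (n:ℝ) := by exact_mod_cast hn
  have hN2 : (0:ℝ) < (n:ℝ) - 2 := by linarith
  have hNpos : (0:ℝ) < (n:ℝ) := by linarith
  set m : ℝ := ((n:ℝ) - 2) / 2 with hm
  have hmpos : 0 < m := by rw [hm]; positivity
  set c : ℝ := ((n:ℝ) * ((n:ℝ) - 2)) ^ (((n:ℝ) - 2) / 4) with hc
  have hB0 : (0:ℝ) < (n:ℝ) * ((n:ℝ) - 2) := mul_pos hNpos hN2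
  have hcpos : 0 < c := Real.rpow_pos_of_pos hB0 _
  have hApos : ∀ x : En n, 0 < lam ^ 2 + ‖x - x₀‖ ^ 2 := fun x => by positivity
  have hu' : ∀ x, u x = c * lam ^ m * (lam ^ 2 + ‖x - x₀‖ ^ 2) ^ (-m) := by
    intro x
    simp only [hu]
    rw [Real.div_rpow hlam.le (hApos x).le, Real.rpow_neg (hApos x).le, div_eq_mul_inv,
      mul_assoc]
  have hupos : ∀ x, 0 < u x := fun x => by
    rw [hu' x]
    exact mul_pos (mul_pos hcpos (Real.rpow_pos_of_pos hlam m))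
      (Real.rpow_pos_of_pos (hApos x) _)
  -- smoothness
  have hA_cd : ContDiff ℝ (⊤ : ℕ∞) (fun y : En n => lam ^ 2 + ‖y - x₀‖ ^ 2) :=
    contDiff_const.add ((contDiff_id.sub contDiff_const).norm_sq ℝ)
  have hucd : ContDiff ℝ (⊤ : ℕ∞) u := by
    rw [contDiff_iff_contDiffAt]
    intro x
    rw [hu]
    exact contDiffAt_const.mul
      ((contDiffAt_const.div hA_cd.contDiffAt (hApos x).ne').rpow_const_of_ne
        (ne_of_gt (div_pos hlam (hApos x))))
  refine ⟨hucd, hupos, ?_⟩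
  -- derivative machinery
  have hA' : ∀ x : En n, HasFDerivAt (fun y : En n => lam ^ 2 + ‖y - x₀‖ ^ 2)
      (2 • innerSL ℝ (x - x₀)) x := fun x => by
    simpa using (((hasFDerivAt_id x).sub_const x₀).norm_sq).const_add (lam ^ 2)
  have hP : ∀ (r : ℝ) (x : En n),
      HasFDerivAt (fun y : En n => (lam ^ 2 + ‖y - x₀‖ ^ 2) ^ r)
        ((r * (lam ^ 2 + ‖x - x₀‖ ^ 2) ^ (r - 1)) • (2 • innerSL ℝ (x - x₀))) x :=
    fun r x => (hA' x).rpow_const (Or.inl (hApos x).ne')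
  set C : ℝ := c * lam ^ m * (-m) * 2 with hC
  have hpart : ∀ (y : En n) (i : Fin n),
      fderiv ℝ u y (EuclideanSpace.single i 1)
        = C * (lam ^ 2 + ‖y - x₀‖ ^ 2) ^ (-m - 1) * (y i - x₀ i) := by
    intro y i
    have h : HasFDerivAt u
        ((c * lam ^ m) • ((-m * (lam ^ 2 + ‖y - x₀‖ ^ 2) ^ (-m - 1)) •
          (2 • innerSL ℝ (y - x₀)))) y := by
      have h0 := (hP (-m) y).const_mul (c * lam ^ m)
      have hfun : (fun z : En n => c * lam ^ m * (lam ^ 2 + ‖z - x₀‖ ^ 2) ^ (-m)) = u := by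
        funext z; rw [hu' z]
      rw [hfun] at h0
      exact h0
    rw [h.fderiv]
    simp only [ContinuousLinearMap.smul_apply, ContinuousLinearMap.coe_smul', Pi.smul_apply,
      innerSL_apply_apply, smul_eq_mul, EuclideanSpace.inner_single_right, RCLike.inner_apply,
      conj_trivial, one_mul]
    have : (y - x₀) i = y i - x₀ i := by simp
    rw [this, hC]
    ring
  have hsecond : ∀ (x : En n) (i : Fin n),
      fderiv ℝ (fun y => fderiv ℝ u y (EuclideanSpace.single i 1)) x (EuclideanSpace.single i 1)
        = C * ((-m - 1) * (lam ^ 2 + ‖x - x₀‖ ^ 2) ^ (-m - 1 - 1)) * 2 * (x i - x₀ i) ^ 2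
          + C * (lam ^ 2 + ‖x - x₀‖ ^ 2) ^ (-m - 1) := by
    intro x i
    have hfe : (fun y => fderiv ℝ u y (EuclideanSpace.single i 1))
        = fun y => C * (lam ^ 2 + ‖y - x₀‖ ^ 2) ^ (-m - 1) * (y i - x₀ i) := by
      funext y; exact hpart y i
    rw [hfe]
    have h1 : HasFDerivAt (fun y : En n => C * (lam ^ 2 + ‖y - x₀‖ ^ 2) ^ (-m - 1))
        (C • (((-m - 1) * (lam ^ 2 + ‖x - x₀‖ ^ 2) ^ (-m - 1 - 1)) •
          (2 • innerSL ℝ (x - x₀)))) x :=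
      (hP (-m - 1) x).const_mul C
    have h2 : HasFDerivAt (fun y : En n => y i - x₀ i)
        (EuclideanSpace.proj i : En n →L[ℝ] ℝ) x := by
      simpa using ((EuclideanSpace.proj (𝕜 := ℝ) i).hasFDerivAt (x := x)).sub_const (x₀ i)
    have h3 : HasFDerivAt (fun y : En n => C * (lam ^ 2 + ‖y - x₀‖ ^ 2) ^ (-m - 1) * (y i - x₀ i)) _ x :=
      h1.mul h2
    rw [h3.fderiv]
    simp only [ContinuousLinearMap.add_apply, ContinuousLinearMap.smul_apply,
      ContinuousLinearMap.coe_smul', Pi.smul_apply, innerSL_apply_apply, smul_eq_mul,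
      EuclideanSpace.inner_single_right, RCLike.inner_apply, conj_trivial, one_mul]
    have hproj : (EuclideanSpace.proj i : En n →L[ℝ] ℝ) (EuclideanSpace.single i 1) = 1 := by
      simp
    have hxi : (x - x₀) i = x i - x₀ i := by simp
    rw [hproj, hxi]
    ring
  intro x
  have hA := hApos x
  have hnorm : ‖x - x₀‖ ^ 2 = ∑ i, (x i - x₀ i) ^ 2 := by
    rw [EuclideanSpace.norm_eq, Real.sq_sqrt (by positivity)]
    refine Finset.sum_congr rfl fun i _ => ?_
    have : (x - x₀) i = x i - x₀ i := by simp
    rw [this, Real.norm_eq_abs, sq_abs]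
  have hlapx : lap u x
      = C * ((-m - 1) * (lam ^ 2 + ‖x - x₀‖ ^ 2) ^ (-m - 1 - 1)) * 2 * ‖x - x₀‖ ^ 2
        + (n : ℝ) * (C * (lam ^ 2 + ‖x - x₀‖ ^ 2) ^ (-m - 1)) := by
    unfold lap
    rw [Finset.sum_congr rfl fun i _ => hsecond x i, Finset.sum_add_distrib, ← Finset.mul_sum,
      Finset.sum_const, Finset.card_univ, Fintype.card_fin, nsmul_eq_mul, ← hnorm]
  -- compute u x ^ p
  have hup : u x ^ (((n:ℝ) + 2) / ((n:ℝ) - 2))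
      = (c * ((n:ℝ) * ((n:ℝ) - 2))) * (lam ^ m * lam ^ 2) *
        (lam ^ 2 + ‖x - x₀‖ ^ 2) ^ (-m - 1 - 1) := by
    have hlm : (0:ℝ) < lam ^ m := Real.rpow_pos_of_pos hlam m
    have hAm : (0:ℝ) < (lam ^ 2 + ‖x - x₀‖ ^ 2) ^ (-m) := Real.rpow_pos_of_pos hA _
    rw [hu' x, Real.mul_rpow (mul_pos hcpos hlm).le hAm.le,
      Real.mul_rpow hcpos.le hlm.le, hc,
      ← Real.rpow_mul hB0.le, ← Real.rpow_mul hlam.le, ← Real.rpow_mul hA.le]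
    have e1 : ((n:ℝ) - 2) / 4 * (((n:ℝ) + 2) / ((n:ℝ) - 2)) = ((n:ℝ) - 2) / 4 + 1 := by
      field_simp
      ring
    have e2 : m * (((n:ℝ) + 2) / ((n:ℝ) - 2)) = m + 2 := by
      rw [hm]; field_simp; ring
    have e3 : -m * (((n:ℝ) + 2) / ((n:ℝ) - 2)) = -m - 1 - 1 := by
      rw [hm]; field_simp; ring
    rw [e1, e2, e3, Real.rpow_add hB0, Real.rpow_one, Real.rpow_add hlam,
      Real.rpow_two, ← hc]
  have hsplit : (lam ^ 2 + ‖x - x₀‖ ^ 2) ^ (-m - 1)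
      = (lam ^ 2 + ‖x - x₀‖ ^ 2) ^ (-m - 1 - 1) * (lam ^ 2 + ‖x - x₀‖ ^ 2) := by
    have h := Real.rpow_add hA (-m - 1 - 1) 1
    rw [Real.rpow_one] at h
    rw [← h]
    congr 1
    ring
  rw [hlapx, hup, hsplit, hC, hm]
  ring
end
end

section
/- Let n ≥ 3 be an integer and b > 0. Define ũ_b(x) = (|x|² + b²)^{(2-n)/4} and K_b(x) = (n(n-2)/2)(1 − ((n+2)/(2n)) |x|²/(|x|² + b²)) for x ∈ ℝⁿ. Then ũ_b is a smooth positive function satisfying Δũ_b + K_b ũ_b^{(n+2)/(n-2)} = 0 on ℝⁿ, and (n-2)²/4 ≤ K_b(x) ≤ n(n-2)/2 for all x ∈ ℝⁿ. -/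
open MeasureTheory Metric Real Set Filter

noncomputable section

/-- Equations (2.8)-(2.11): ũ_b solves Δũ_b + K_b ũ_b^{(n+2)/(n-2)} = 0 with
(n-2)²/4 ≤ K_b ≤ n(n-2)/2 on ℝⁿ. -/
theorem stmt_9 (n : ℕ) (hn : 3 ≤ n) (b : ℝ) (hb : 0 < b)
    (u K : En n → ℝ)
    (hu : u = fun x => (‖x‖ ^ 2 + b ^ 2) ^ ((2 - (n : ℝ)) / 4))
    (hK : K = fun x => ((n : ℝ) * ((n : ℝ) - 2) / 2) *
      (1 - ((n : ℝ) + 2) / (2 * (n : ℝ)) * (‖x‖ ^ 2 / (‖x‖ ^ 2 + b ^ 2)))) :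
    ContDiff ℝ (⊤ : ℕ∞) u ∧ (∀ x, 0 < u x) ∧
      (∀ x, lap u x + K x * u x ^ (((n : ℝ) + 2) / ((n : ℝ) - 2)) = 0) ∧
      ∀ x, ((n : ℝ) - 2) ^ 2 / 4 ≤ K x ∧ K x ≤ (n : ℝ) * ((n : ℝ) - 2) / 2 := by
  have hn2 : (2 : ℝ) < (n : ℝ) := by
    have : (2 : ℕ) < n := by omega
    exact_mod_cast this
  have hNne : (n : ℝ) ≠ 0 := by linarith
  have hN2ne : (n : ℝ) - 2 ≠ 0 := by linarith
  set α : ℝ := (2 - (n : ℝ)) / 4 with hα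
  have hQpos : ∀ x : En n, (0 : ℝ) < ‖x‖ ^ 2 + b ^ 2 := fun x => by positivity
  -- key derivative lemma
  have key : ∀ (β : ℝ) (x : En n), HasFDerivAt (fun y : En n => (‖y‖ ^ 2 + b ^ 2) ^ β)
      ((2 * β * (‖x‖ ^ 2 + b ^ 2) ^ (β - 1)) • innerSL ℝ x) x := by
    intro β x
    have hq : HasFDerivAt (fun y : En n => ‖y‖ ^ 2 + b ^ 2) (2 • innerSL ℝ x) x :=
      ((hasStrictFDerivAt_norm_sq x).hasFDerivAt).add_const _
    have h := (Real.hasDerivAt_rpow_const (p := β)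
      (Or.inl (hQpos x).ne')).comp_hasFDerivAt x hq
    have heq : (β * (‖x‖ ^ 2 + b ^ 2) ^ (β - 1)) • ((2 : ℕ) • innerSL ℝ x)
        = (2 * β * (‖x‖ ^ 2 + b ^ 2) ^ (β - 1)) • innerSL ℝ x := by
      ext v
      simp [smul_smul, two_smul]
      ring
    rw [heq] at h
    exact h
  -- first derivative in coordinates
  have hfd : ∀ (y : En n) (i : Fin n),
      fderiv ℝ u y (EuclideanSpace.single i 1) =
        2 * α * (‖y‖ ^ 2 + b ^ 2) ^ (α - 1) * y i := by
    intro y i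
    rw [hu, (key α y).fderiv]
    simp [EuclideanSpace.inner_single_right]
  -- second derivative terms
  have hterm : ∀ (x : En n) (i : Fin n),
      fderiv ℝ (fun y : En n => 2 * α * (‖y‖ ^ 2 + b ^ 2) ^ (α - 1) * y i) x
          (EuclideanSpace.single i 1) =
        4 * α * (α - 1) * (‖x‖ ^ 2 + b ^ 2) ^ (α - 1 - 1) * (x i) ^ 2 +
          2 * α * (‖x‖ ^ 2 + b ^ 2) ^ (α - 1) := by
    intro x i
    have h1 : HasFDerivAt (fun y : En n => 2 * α * (‖y‖ ^ 2 + b ^ 2) ^ (α - 1))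
        ((2 * α) • ((2 * (α - 1) * (‖x‖ ^ 2 + b ^ 2) ^ (α - 1 - 1)) • innerSL ℝ x)) x :=
      (key (α - 1) x).const_mul (2 * α)
    have h2 : HasFDerivAt (fun y : En n => y i) (EuclideanSpace.proj i : En n →L[ℝ] ℝ) x :=
      (EuclideanSpace.proj i : En n →L[ℝ] ℝ).hasFDerivAt
    rw [HasFDerivAt.fderiv (f := fun y : En n => 2 * α * (‖y‖ ^ 2 + b ^ 2) ^ (α - 1) * y i) (h1.mul h2)]
    simp [EuclideanSpace.inner_single_right, EuclideanSpace.single_apply]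
    ring
  -- sum of squares of coordinates
  have hsum : ∀ x : En n, ∑ i : Fin n, (x i) ^ 2 = ‖x‖ ^ 2 := by
    intro x
    rw [EuclideanSpace.norm_eq, Real.sq_sqrt (by positivity)]
    simp [sq_abs]
  -- the Laplacian
  have hlap : ∀ x : En n, lap u x =
      4 * α * (α - 1) * (‖x‖ ^ 2 + b ^ 2) ^ (α - 1 - 1) * ‖x‖ ^ 2 +
        (n : ℝ) * (2 * α * (‖x‖ ^ 2 + b ^ 2) ^ (α - 1)) := by
    intro x
    have hcongr : ∀ i : Fin n, (fun y : En n => fderiv ℝ u y (EuclideanSpace.single i 1))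
        = fun y : En n => 2 * α * (‖y‖ ^ 2 + b ^ 2) ^ (α - 1) * y i := by
      intro i; funext y; exact hfd y i
    unfold lap
    calc (∑ i : Fin n, fderiv ℝ (fun y : En n => fderiv ℝ u y (EuclideanSpace.single i 1)) x
            (EuclideanSpace.single i 1))
        = ∑ i : Fin n, (4 * α * (α - 1) * (‖x‖ ^ 2 + b ^ 2) ^ (α - 1 - 1) * (x i) ^ 2 +
            2 * α * (‖x‖ ^ 2 + b ^ 2) ^ (α - 1)) := by
          refine Finset.sum_congr rfl fun i _ => ?_
          rw [hcongr i, hterm x i]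
      _ = 4 * α * (α - 1) * (‖x‖ ^ 2 + b ^ 2) ^ (α - 1 - 1) * ‖x‖ ^ 2 +
            (n : ℝ) * (2 * α * (‖x‖ ^ 2 + b ^ 2) ^ (α - 1)) := by
          rw [Finset.sum_add_distrib, Finset.sum_const, ← Finset.mul_sum, hsum x]
          simp [Finset.card_univ, nsmul_eq_mul]
  refine ⟨?_, ?_, ?_, ?_⟩
  · -- smoothness
    rw [hu, contDiff_iff_contDiffAt]
    intro x
    exact (((contDiff_norm_sq ℝ).add contDiff_const).contDiffAt).rpow_const_of_ne (hQpos x).ne'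
  · -- positivity
    intro x
    rw [hu]
    exact Real.rpow_pos_of_pos (hQpos x) _
  · -- the PDE
    intro x
    have hpow : u x ^ (((n : ℝ) + 2) / ((n : ℝ) - 2)) = (‖x‖ ^ 2 + b ^ 2) ^ (α - 1) := by
      have hαβ : α * (((n : ℝ) + 2) / ((n : ℝ) - 2)) = α - 1 := by
        rw [hα]; field_simp; ring
      rw [hu]
      show ((‖x‖ ^ 2 + b ^ 2) ^ α) ^ (((n : ℝ) + 2) / ((n : ℝ) - 2)) = _
      rw [← Real.rpow_mul (hQpos x).le, hαβ]
    rw [hlap x, hpow]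
    have hQ1 : (‖x‖ ^ 2 + b ^ 2) ^ (α - 1)
        = (‖x‖ ^ 2 + b ^ 2) ^ (α - 1 - 1) * (‖x‖ ^ 2 + b ^ 2) := by
      rw [← Real.rpow_add_one (hQpos x).ne' (α - 1 - 1)]
      norm_num
    rw [hQ1]
    have hmain : 4 * α * (α - 1) * ‖x‖ ^ 2 + (n : ℝ) * (2 * α * (‖x‖ ^ 2 + b ^ 2)) +
        K x * (‖x‖ ^ 2 + b ^ 2) = 0 := by
      rw [hK, hα]
      field_simp
      ring
    linear_combination (‖x‖ ^ 2 + b ^ 2) ^ (α - 1 - 1) * hmain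
  · -- bounds on K
    intro x
    have hQp := hQpos x
    have ht0 : (0 : ℝ) ≤ ‖x‖ ^ 2 / (‖x‖ ^ 2 + b ^ 2) := by positivity
    have ht1 : ‖x‖ ^ 2 / (‖x‖ ^ 2 + b ^ 2) ≤ 1 := by
      rw [div_le_one hQp]
      nlinarith [sq_nonneg b]
    have hKx : K x = (n : ℝ) * ((n : ℝ) - 2) / 2 -
        ((n : ℝ) - 2) * ((n : ℝ) + 2) / 4 * (‖x‖ ^ 2 / (‖x‖ ^ 2 + b ^ 2)) := by
      rw [hK]
      field_simp
      ring
    have hc : (0 : ℝ) ≤ ((n : ℝ) - 2) * ((n : ℝ) + 2) / 4 := by nlinarith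
    constructor
    · rw [hKx]
      nlinarith [mul_nonneg hc (by linarith : (0 : ℝ) ≤ 1 - ‖x‖ ^ 2 / (‖x‖ ^ 2 + b ^ 2))]
    · rw [hKx]
      nlinarith [mul_nonneg hc ht0]
end
end

section
/- Let s₀ ∈ ℝ and C₅ > 0, and let w : [s₀, ∞) → ℝ be a twice differentiable nonnegative function satisfying w''(s) ≤ C₅ − w(s) for all s ≥ s₀. Then w is bounded from above on [s₀, ∞); in fact there is a constant depending only on C₅, namely (C₅ + 1) + [2(C₅ + 1)]², bounding w(s) for all sufficiently large s. -/
open MeasureTheory Metric Real Set Filter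

noncomputable section

/-! Since `w ≥ 0`, we have `w'' ≤ C₅` everywhere and `w'' ≤ -1` wherever `w ≥ C₅ + 1`. The latter
cannot persist forever (a function with `w'' ≤ -1` eventually becomes negative), so `w` drops to
`C₅ + 1` at some time `a`. After `a`, an excursion above `C₅ + 1` starts at a time `c` with
`w c = C₅ + 1`; there `w'' ≤ C₅` on `[c - 1, c]` and `w (c - 1) ≥ 0` bound `w' c` by
`3 (C₅ + 1) / 2`, and `w'' ≤ -1` during the excursion caps its height above `C₅ + 1` by
`(w' c)² / 2`. -/

theorem ConcaveOn.le_add_mul_sub_of_hasDerivAt {S : Set ℝ} {f : ℝ → ℝ} {x y f' : ℝ}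
    (hfc : ConcaveOn ℝ S f) (hx : x ∈ S) (hy : y ∈ S) (hf' : HasDerivAt f f' x) :
    f y ≤ f x + f' * (y - x) := by
  rcases lt_trichotomy x y with hxy | rfl | hxy
  · have h := hfc.slope_le_of_hasDerivAt hx hy hxy hf'
    rw [slope_def_field, div_le_iff₀ (sub_pos.2 hxy)] at h
    linarith
  · simp
  · have h := hfc.le_slope_of_hasDerivAt hy hx hxy hf'
    rw [slope_def_field, le_div_iff₀ (sub_pos.2 hxy)] at h
    linarith

/-- `f - c t² / 2` is concave on `D`, so it lies below its tangent lines. -/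
theorem le_second_order_taylor_of_deriv2_le {f : ℝ → ℝ} {D : Set ℝ} {c x y : ℝ}
    (hD : Convex ℝ D) (hf : ∀ t ∈ D, DifferentiableAt ℝ f t)
    (hf' : ∀ t ∈ D, DifferentiableAt ℝ (deriv f) t) (hf'' : ∀ t ∈ D, deriv (deriv f) t ≤ c)
    (hx : x ∈ D) (hy : y ∈ D) :
    f y ≤ f x + deriv f x * (y - x) + c * (y - x) ^ 2 / 2 := by
  have hg : ∀ t ∈ D, HasDerivAt (fun t => f t - c * t ^ 2 / 2) (deriv f t - c * t) t := by
    intro t ht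
    exact ((hf t ht).hasDerivAt.fun_sub (((hasDerivAt_pow 2 t).const_mul c).div_const 2)).congr_deriv
      (by ring)
  have hg' : ∀ t ∈ D, HasDerivAt (fun t => deriv f t - c * t) (deriv (deriv f) t - c) t := by
    intro t ht
    exact ((hf' t ht).hasDerivAt.fun_sub ((hasDerivAt_id t).const_mul c)).congr_deriv (by ring)
  have hconc : ConcaveOn ℝ D (fun t => f t - c * t ^ 2 / 2) :=
    concaveOn_of_hasDerivWithinAt2_nonpos hD
      (fun t ht => (hg t ht).continuousAt.continuousWithinAt)
      (fun t ht => (hg t (interior_subset ht)).hasDerivWithinAt)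
      (fun t ht => (hg' t (interior_subset ht)).hasDerivWithinAt)
      (fun t ht => sub_nonpos.2 (hf'' t (interior_subset ht)))
  linear_combination hconc.le_add_mul_sub_of_hasDerivAt hx hy (hg x hx)

theorem exists_lt_of_deriv2_le_neg {f : ℝ → ℝ} {T c : ℝ} (hc : c < 0)
    (hf : ∀ t ∈ Ici T, DifferentiableAt ℝ f t) (hf' : ∀ t ∈ Ici T, DifferentiableAt ℝ (deriv f) t)
    (hf'' : ∀ t ∈ Ici T, deriv (deriv f) t ≤ c) (m : ℝ) : ∃ y, T ≤ y ∧ f y < m := by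
  have hlin : Tendsto (fun y => y - T) atTop atTop := tendsto_atTop_add_const_right _ _ tendsto_id
  have hquad : Tendsto (fun y => f T + (y - T) * (deriv f T + c / 2 * (y - T))) atTop atBot :=
    tendsto_atBot_add_const_left _ _ <| hlin.atTop_mul_atBot₀ <|
      tendsto_atBot_add_const_left _ _ (hlin.const_mul_atTop_of_neg (by linarith))
  obtain ⟨y, hyT, hy⟩ := ((eventually_ge_atTop T).and (hquad.eventually_lt_atBot m)).exists
  refine ⟨y, hyT, lt_of_le_of_lt ?_ hy⟩
  linear_combination le_second_order_taylor_of_deriv2_le (convex_Ici T) hf hf' hf''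
    self_mem_Ici (mem_Ici.2 hyT)

theorem exists_last_eq_of_le_of_lt {f : ℝ → ℝ} {a b y : ℝ} (hab : a ≤ b)
    (hf : ContinuousOn f (Icc a b)) (ha : f a ≤ y) (hb : y < f b) :
    ∃ c ∈ Ico a b, f c = y ∧ ∀ t ∈ Ioc c b, y < f t := by
  have hS : IsCompact (Icc a b ∩ f ⁻¹' Iic y) :=
    isCompact_Icc.of_isClosed_subset (hf.preimage_isClosed_of_isClosed isClosed_Icc isClosed_Iic)
      inter_subset_left
  obtain ⟨c, ⟨hcI, hcy⟩, hgreat⟩ := hS.exists_isGreatest ⟨a, left_mem_Icc.2 hab, ha⟩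
  have hcb : c < b := hcI.2.lt_of_ne (by rintro rfl; exact hb.not_ge hcy)
  have hlast : ∀ t ∈ Ioc c b, y < f t := fun t ht =>
    not_le.1 fun hty => ht.1.not_ge (hgreat ⟨⟨hcI.1.trans ht.1.le, ht.2⟩, hty⟩)
  refine ⟨c, ⟨hcI.1, hcb⟩, le_antisymm hcy (not_lt.1 fun hlt => ?_), hlast⟩
  obtain ⟨t, ht, hft⟩ := intermediate_value_Icc hcb.le (hf.mono (Icc_subset_Icc_left hcI.1))
    ⟨hlt.le, hb.le⟩
  rcases ht.1.eq_or_lt with rfl | hct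
  · exact hlt.ne hft
  · exact (hlast t ⟨hct, ht.2⟩).ne' hft

theorem le_of_deriv2_le_sub_self {w : ℝ → ℝ} {s₀ C a s : ℝ}
    (hw1 : ∀ s, s₀ ≤ s → DifferentiableAt ℝ w s)
    (hw2 : ∀ s, s₀ ≤ s → DifferentiableAt ℝ (deriv w) s)
    (hw_nonneg : ∀ s, s₀ ≤ s → 0 ≤ w s)
    (hineq : ∀ s, s₀ ≤ s → deriv (deriv w) s ≤ C - w s)
    (ha : s₀ + 1 ≤ a) (hwa : w a ≤ C + 1) (hs : a ≤ s) :
    w s ≤ (C + 1) + (2 * (C + 1)) ^ 2 := by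
  rcases le_or_gt (w s) (C + 1) with hle | hlt
  · nlinarith
  obtain ⟨c, hc, hwc, hgt⟩ := exists_last_eq_of_le_of_lt hs
    (fun t ht => (hw1 t (by linarith [ht.1])).continuousAt.continuousWithinAt) hwa hlt
  have hc₀ : s₀ + 1 ≤ c := ha.trans hc.1
  have hconc : ∀ t ∈ Icc c s, deriv (deriv w) t ≤ -1 := by
    intro t ht
    have hwt : C + 1 ≤ w t := by
      rcases ht.1.eq_or_lt with rfl | hct
      · exact hwc.ge
      · exact (hgt t ⟨hct, ht.2⟩).le
    linarith [hineq t (by linarith [ht.1])]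
  have hforward := le_second_order_taylor_of_deriv2_le (convex_Icc c s)
    (fun t ht => hw1 t (by linarith [ht.1])) (fun t ht => hw2 t (by linarith [ht.1])) hconc
    (left_mem_Icc.2 hc.2.le) (right_mem_Icc.2 hc.2.le)
  have hbackward := le_second_order_taylor_of_deriv2_le (c := C) (convex_Ici s₀) hw1 hw2
    (fun t ht => by linarith [hineq t ht, hw_nonneg t ht])
    (mem_Ici.2 (by linarith) : c ∈ Ici s₀) (mem_Ici.2 (by linarith) : c - 1 ∈ Ici s₀)
  have hpos := hw_nonneg (c - 1) (by linarith)
  have hC : 0 ≤ C + 1 := hwc ▸ hw_nonneg c (by linarith)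
  have hslope : deriv w c ≤ 3 / 2 * (C + 1) := by nlinarith
  nlinarith [mul_le_mul_of_nonneg_right hslope (sub_nonneg.2 hc.2.le),
    sq_nonneg (3 / 2 * (C + 1) - (s - c))]

theorem stmt_13_general (s₀ C₅ : ℝ) (w : ℝ → ℝ)
    (hw1 : ∀ s : ℝ, s₀ ≤ s → DifferentiableAt ℝ w s)
    (hw2 : ∀ s : ℝ, s₀ ≤ s → DifferentiableAt ℝ (deriv w) s)
    (hw_nonneg : ∀ s : ℝ, s₀ ≤ s → 0 ≤ w s)
    (hineq : ∀ s : ℝ, s₀ ≤ s → deriv (deriv w) s ≤ C₅ - w s) :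
    (∃ M : ℝ, ∀ s : ℝ, s₀ ≤ s → w s ≤ M) ∧
    ∃ s₁ : ℝ, ∀ s : ℝ, s₁ ≤ s → w s ≤ (C₅ + 1) + (2 * (C₅ + 1)) ^ 2 := by
  obtain ⟨a, ha, hwa⟩ : ∃ a, s₀ + 1 ≤ a ∧ w a ≤ C₅ + 1 := by
    by_contra! hbig
    have hT : ∀ t ∈ Ici (s₀ + 1), s₀ ≤ t := fun t ht => by linarith [mem_Ici.1 ht]
    obtain ⟨y, hy, hwy⟩ := exists_lt_of_deriv2_le_neg (T := s₀ + 1) neg_one_lt_zero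
      (fun t ht => hw1 t (hT t ht)) (fun t ht => hw2 t (hT t ht))
      (fun t ht => by linarith [hineq t (hT t ht), hbig t ht]) 0
    exact hwy.not_ge (hw_nonneg y (by linarith))
  have hbound : ∀ s, a ≤ s → w s ≤ (C₅ + 1) + (2 * (C₅ + 1)) ^ 2 := fun s hs =>
    le_of_deriv2_le_sub_self hw1 hw2 hw_nonneg hineq ha hwa hs
  refine ⟨?_, a, hbound⟩
  obtain ⟨M, hM⟩ := (isCompact_Icc (a := s₀) (b := a)).bddAbove_image (f := w)
    fun t ht => (hw1 t ht.1).continuousAt.continuousWithinAt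
  refine ⟨max M ((C₅ + 1) + (2 * (C₅ + 1)) ^ 2), fun s hs => ?_⟩
  rcases le_total s a with hsa | has
  · exact (hM (mem_image_of_mem w ⟨hs, hsa⟩)).trans (le_max_left _ _)
  · exact (hbound s has).trans (le_max_right _ _)

/-- The ODE-inequality lemma from the proof of Theorem A: a nonnegative twice
differentiable function with w'' ≤ C₅ - w on [s₀,∞) is bounded above, eventually by
(C₅ + 1) + (2(C₅ + 1))². -/
theorem stmt_13 (s₀ C₅ : ℝ) (hC₅ : 0 < C₅) (w : ℝ → ℝ)
    (hw1 : ∀ s : ℝ, s₀ ≤ s → DifferentiableAt ℝ w s)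
    (hw2 : ∀ s : ℝ, s₀ ≤ s → DifferentiableAt ℝ (deriv w) s)
    (hw_nonneg : ∀ s : ℝ, s₀ ≤ s → 0 ≤ w s)
    (hineq : ∀ s : ℝ, s₀ ≤ s → deriv (deriv w) s ≤ C₅ - w s) :
    (∃ M : ℝ, ∀ s : ℝ, s₀ ≤ s → w s ≤ M) ∧
    ∃ s₁ : ℝ, ∀ s : ℝ, s₁ ≤ s → w s ≤ (C₅ + 1) + (2 * (C₅ + 1)) ^ 2 :=
  stmt_13_general s₀ C₅ w hw1 hw2 hw_nonneg hineq
end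
end
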